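/- arXiv:0802.2373 — 12 statements merged into one kernel-verified Lean document; each statement's English description precedes it below -/
import Mathlib

section
/- Let M, p, q ≥ 1 and let f be a p×q matrix of rational functions of M complex variables analytic at the origin: f_{il} = P_{il}/Q_{il} with P_{il}, Q_{il} ∈ ℂ[z_1,…,z_M] and Q_{il}(0) ≠ 0 for all entries. Then there exist N ∈ ℕ, matrices D ∈ ℂ^{p×q}, C ∈ ℂ^{p×N}, A_1,…,A_M ∈ ℂ^{N×N}, B_1,…,B_M ∈ ℂ^{N×q}, and ε > 0 such that for every z ∈ ℂ^M with ‖z‖ < ε: all Q_{il}(z) ≠ 0, the matrix I_N − Σ_{k=1}^M z_k A_k is invertible, and f(z) = D + C (I_N − Σ_{k=1}^M z_k A_k)^{−1} (Σ_{k=1}^M z_k B_k). -/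
/-!
A function is realizable when near `0` it equals `D + C (1 - Σ zₖ Aₖ)⁻¹ (Σ zₖ Bₖ)`. Constants and
coordinates are realizable, and realizable functions are closed under sums, products, and inverses
of functions with `f 0` invertible. So each entry `P / Q` is realizable as a `1 × 1` matrix, and
the whole matrix is assembled from its entries as `Σ eᵢ (P / Q)ᵢⱼ eⱼᵀ`.
-/

open Matrix Filter Topology

namespace Realization

variable {𝕜 σ ι ι' κ α β γ : Type*} [NormedField 𝕜] [Fintype σ]

def pencil [DecidableEq ι] (A : σ → Matrix ι ι 𝕜) (z : σ → 𝕜) : Matrix ι ι 𝕜 :=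
  1 - ∑ k, z k • A k

variable (ι) in
def HasRealization [Fintype ι] [DecidableEq ι] (f : (σ → 𝕜) → Matrix α β 𝕜) : Prop :=
  ∃ (D : Matrix α β 𝕜) (C : Matrix α ι 𝕜) (A : σ → Matrix ι ι 𝕜) (B : σ → Matrix ι β 𝕜),
    ∀ᶠ z in 𝓝 0, IsUnit (pencil A z) ∧ f z = D + C * (pencil A z)⁻¹ * ∑ k, z k • B k

def IsRealizable (f : (σ → 𝕜) → Matrix α β 𝕜) : Prop :=
  ∃ n : ℕ, HasRealization (Fin n) f

theorem eventually_isUnit_pencil [Fintype ι] [DecidableEq ι] (A : σ → Matrix ι ι 𝕜) :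
    ∀ᶠ z in 𝓝 0, IsUnit (pencil A z) := by
  have hcont : Continuous fun z => (pencil A z).det := by unfold pencil; fun_prop
  have hdet : (pencil A 0).det ≠ 0 := by simp [pencil]
  filter_upwards [hcont.continuousAt.eventually_ne hdet] with z hz
  exact (isUnit_iff_isUnit_det _).2 hz.isUnit

theorem pencil_submatrix [DecidableEq ι] [DecidableEq κ] (A : σ → Matrix ι ι 𝕜) (e : κ ≃ ι)
    (z : σ → 𝕜) : pencil (fun k => (A k).submatrix e e) z = (pencil A z).submatrix e e := by
  ext i j
  simp [pencil, Matrix.sum_apply, one_apply, e.injective.eq_iff]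

theorem pencil_fromBlocks [DecidableEq ι] [DecidableEq ι'] (A₁ : σ → Matrix ι ι 𝕜)
    (G : σ → Matrix ι ι' 𝕜) (A₂ : σ → Matrix ι' ι' 𝕜) (z : σ → 𝕜) :
    pencil (fun k => fromBlocks (A₁ k) (G k) 0 (A₂ k)) z
      = fromBlocks (pencil A₁ z) (-∑ k, z k • G k) 0 (pencil A₂ z) := by
  ext (i | i) (j | j) <;> simp [pencil, Matrix.sum_apply, one_apply]

theorem sum_smul_fromRows (B₁ : σ → Matrix ι β 𝕜) (B₂ : σ → Matrix ι' β 𝕜) (z : σ → 𝕜) :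
    ∑ k, z k • fromRows (B₁ k) (B₂ k) = fromRows (∑ k, z k • B₁ k) (∑ k, z k • B₂ k) := by
  ext (i | i) j <;> simp [Matrix.sum_apply]

theorem sum_smul_mul [Fintype β] (B : σ → Matrix ι β 𝕜) (X : Matrix β γ 𝕜) (z : σ → 𝕜) :
    ∑ k, z k • (B k * X) = (∑ k, z k • B k) * X := by
  rw [Matrix.sum_mul]
  simp only [Matrix.smul_mul]

theorem HasRealization.of_equiv [Fintype ι] [DecidableEq ι] [Fintype κ] [DecidableEq κ]
    {f : (σ → 𝕜) → Matrix α β 𝕜} (e : ι ≃ κ) (h : HasRealization ι f) :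
    HasRealization κ f := by
  obtain ⟨D, C, A, B, hf⟩ := h
  refine ⟨D, C.submatrix id e.symm, fun k => (A k).submatrix e.symm e.symm,
    fun k => (B k).submatrix e.symm id, ?_⟩
  filter_upwards [hf] with z ⟨hu, hfz⟩
  rw [pencil_submatrix, isUnit_submatrix_equiv, inv_submatrix_equiv]
  refine ⟨hu, ?_⟩
  have hB : ∑ k, z k • (B k).submatrix e.symm id = (∑ k, z k • B k).submatrix e.symm id := by
    ext i j
    simp [Matrix.sum_apply]
  rw [hB, submatrix_mul_equiv, submatrix_mul_equiv, hfz]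
  simp

theorem HasRealization.isRealizable [Fintype ι] [DecidableEq ι] {f : (σ → 𝕜) → Matrix α β 𝕜}
    (h : HasRealization ι f) : IsRealizable f :=
  ⟨_, h.of_equiv (Fintype.equivFin ι)⟩

theorem HasRealization.add [Fintype ι] [DecidableEq ι] [Fintype ι'] [DecidableEq ι']
    {f g : (σ → 𝕜) → Matrix α β 𝕜} (hf : HasRealization ι f) (hg : HasRealization ι' g) :
    HasRealization (ι ⊕ ι') fun z => f z + g z := by
  obtain ⟨D₁, C₁, A₁, B₁, h₁⟩ := hf
  obtain ⟨D₂, C₂, A₂, B₂, h₂⟩ := hg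
  refine ⟨D₁ + D₂, fromCols C₁ C₂, fun k => fromBlocks (A₁ k) 0 0 (A₂ k),
    fun k => fromRows (B₁ k) (B₂ k), ?_⟩
  filter_upwards [h₁, h₂] with z ⟨hu₁, hf⟩ ⟨hu₂, hg⟩
  rw [pencil_fromBlocks, isUnit_fromBlocks_zero₂₁,
    inv_fromBlocks_zero₂₁_of_isUnit_iff _ _ _ (iff_of_true hu₁ hu₂), sum_smul_fromRows]
  refine ⟨⟨hu₁, hu₂⟩, ?_⟩
  simp [hf, hg, fromCols_mul_fromBlocks, fromCols_mul_fromRows]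
  abel

/-- Cascade of the two systems: the state of `f` is driven by the output `C₂ x₂ + D₂ u` of `g`,
whence the blocks `B₁ₖ C₂`, `B₁ₖ D₂` and `D₁ C₂`. -/
theorem HasRealization.mul [Fintype ι] [DecidableEq ι] [Fintype ι'] [DecidableEq ι']
    [Fintype β] {f : (σ → 𝕜) → Matrix α β 𝕜} {g : (σ → 𝕜) → Matrix β γ 𝕜}
    (hf : HasRealization ι f) (hg : HasRealization ι' g) :
    HasRealization (ι ⊕ ι') fun z => f z * g z := by
  obtain ⟨D₁, C₁, A₁, B₁, h₁⟩ := hf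
  obtain ⟨D₂, C₂, A₂, B₂, h₂⟩ := hg
  refine ⟨D₁ * D₂, fromCols C₁ (D₁ * C₂), fun k => fromBlocks (A₁ k) (B₁ k * C₂) 0 (A₂ k),
    fun k => fromRows (B₁ k * D₂) (B₂ k), ?_⟩
  filter_upwards [h₁, h₂] with z ⟨hu₁, hf⟩ ⟨hu₂, hg⟩
  rw [pencil_fromBlocks, isUnit_fromBlocks_zero₂₁,
    inv_fromBlocks_zero₂₁_of_isUnit_iff _ _ _ (iff_of_true hu₁ hu₂), sum_smul_fromRows,
    sum_smul_mul, sum_smul_mul]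
  refine ⟨⟨hu₁, hu₂⟩, ?_⟩
  simp [hf, hg, fromCols_mul_fromBlocks, fromCols_mul_fromRows, Matrix.mul_add, Matrix.add_mul,
    Matrix.mul_assoc]
  abel

/-- By Woodbury, `(D + C K⁻¹ b)⁻¹ = D⁻¹ - D⁻¹ C (K + b D⁻¹ C)⁻¹ b D⁻¹`, and `K + b D⁻¹ C` is the
pencil of the matrices `Aₖ - Bₖ D⁻¹ C`. -/
theorem HasRealization.inv [Fintype ι] [DecidableEq ι] [Fintype α] [DecidableEq α]
    {f : (σ → 𝕜) → Matrix α α 𝕜} (hf : HasRealization ι f) (h0 : IsUnit (f 0)) :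
    HasRealization ι fun z => (f z)⁻¹ := by
  obtain ⟨D, C, A, B, h⟩ := hf
  have hD : IsUnit D := by simpa [(h.self_of_nhds).2, pencil] using h0
  refine ⟨D⁻¹, -(D⁻¹ * C), fun k => A k - B k * D⁻¹ * C, fun k => B k * D⁻¹, ?_⟩
  filter_upwards [h, eventually_isUnit_pencil fun k => A k - B k * D⁻¹ * C]
    with z ⟨hu, hfz⟩ hu'
  have hpencil : pencil (fun k => A k - B k * D⁻¹ * C) z
      = (pencil A z)⁻¹⁻¹ + (∑ k, z k • B k) * D⁻¹ * C := by
    rw [nonsing_inv_nonsing_inv _ ((isUnit_iff_isUnit_det _).1 hu)]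
    simp only [pencil, smul_sub, Finset.sum_sub_distrib, ← sum_smul_mul, Matrix.mul_assoc]
    abel
  rw [hpencil] at hu' ⊢
  refine ⟨hu', ?_⟩
  rw [hfz, add_mul_mul_inv_eq_sub _ _ _ _ hD (isUnit_nonsing_inv_iff.2 hu) hu', sum_smul_mul]
  simp [Matrix.mul_assoc, sub_eq_add_neg]

theorem IsRealizable.congr {f g : (σ → 𝕜) → Matrix α β 𝕜} (hf : IsRealizable f)
    (hfg : ∀ z, f z = g z) : IsRealizable g := by
  rwa [← funext hfg]

theorem isRealizable_const (D : Matrix α β 𝕜) : IsRealizable fun _ : σ → 𝕜 => D :=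
  ⟨0, D, 0, 0, 0, .of_forall fun z => by simp [pencil]⟩

theorem IsRealizable.add {f g : (σ → 𝕜) → Matrix α β 𝕜} (hf : IsRealizable f)
    (hg : IsRealizable g) : IsRealizable fun z => f z + g z := by
  obtain ⟨_, hf⟩ := hf
  obtain ⟨_, hg⟩ := hg
  exact (hf.add hg).isRealizable

theorem IsRealizable.mul [Fintype β] {f : (σ → 𝕜) → Matrix α β 𝕜} {g : (σ → 𝕜) → Matrix β γ 𝕜}
    (hf : IsRealizable f) (hg : IsRealizable g) : IsRealizable fun z => f z * g z := by
  obtain ⟨_, hf⟩ := hf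
  obtain ⟨_, hg⟩ := hg
  exact (hf.mul hg).isRealizable

theorem IsRealizable.inv [Fintype α] [DecidableEq α] {f : (σ → 𝕜) → Matrix α α 𝕜}
    (hf : IsRealizable f) (h0 : IsUnit (f 0)) : IsRealizable fun z => (f z)⁻¹ := by
  obtain ⟨_, hf⟩ := hf
  exact (hf.inv h0).isRealizable

theorem IsRealizable.sum (s : Finset ι) {F : ι → (σ → 𝕜) → Matrix α β 𝕜}
    (h : ∀ i ∈ s, IsRealizable (F i)) : IsRealizable fun z => ∑ i ∈ s, F i z := by
  classical
  induction s using Finset.induction_on with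
  | empty => simpa using isRealizable_const (0 : Matrix α β 𝕜)
  | insert a s ha ih =>
    simp_rw [Finset.sum_insert ha]
    exact (h a (Finset.mem_insert_self a s)).add
      (ih fun i hi => h i (Finset.mem_insert_of_mem hi))

theorem isRealizable_coord (k₀ : σ) : IsRealizable fun z : σ → 𝕜 => scalar Unit (z k₀) := by
  classical
  exact HasRealization.isRealizable (ι := Unit) ⟨0, 1, 0, Pi.single k₀ 1,
    .of_forall fun z => by simp [pencil, Pi.single_apply, smul_one_eq_diagonal]⟩

theorem isRealizable_eval (p : MvPolynomial σ 𝕜) :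
    IsRealizable fun z => scalar Unit (MvPolynomial.eval z p) := by
  induction p using MvPolynomial.induction_on with
  | C a => simpa using isRealizable_const (scalar Unit a)
  | add p q hp hq => simpa using hp.add hq
  | mul_X p k hp => simpa using hp.mul (isRealizable_coord k)

theorem scalar_unit_inv (c : 𝕜) : (scalar Unit c)⁻¹ = scalar Unit c⁻¹ := by
  ext
  simp [inv_subsingleton]

theorem isRealizable_eval_div (p q : MvPolynomial σ 𝕜) (hq : MvPolynomial.eval 0 q ≠ 0) :
    IsRealizable fun z => scalar Unit (MvPolynomial.eval z p / MvPolynomial.eval z q) := by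
  have hinv := (isRealizable_eval q).inv ((isUnit_iff_ne_zero.2 hq).map (scalar Unit))
  simpa [div_eq_mul_inv, scalar_unit_inv] using (isRealizable_eval p).mul hinv

theorem IsRealizable.of_entries [Fintype α] [DecidableEq α] [Fintype β] [DecidableEq β]
    {g : α → β → (σ → 𝕜) → 𝕜} (h : ∀ i j, IsRealizable fun z => scalar Unit (g i j z)) :
    IsRealizable fun z => of fun i j => g i j z := by
  have hsingle : ∀ i j, IsRealizable fun z => single i j (g i j z) := fun i j =>
    (((isRealizable_const (single i () 1)).mul (h i j)).mul
      (isRealizable_const (single () j 1))).congr fun z => by simp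
  simpa [sum_sum_single] using
    IsRealizable.sum Finset.univ fun i _ => IsRealizable.sum Finset.univ fun j _ => hsingle i j

end Realization

theorem stmt2_general (M p q : ℕ)
    (P Q : Fin p → Fin q → MvPolynomial (Fin M) ℂ)
    (hQ : ∀ i l, MvPolynomial.eval (0 : Fin M → ℂ) (Q i l) ≠ 0) :
    ∃ (N : ℕ) (D : Matrix (Fin p) (Fin q) ℂ) (C : Matrix (Fin p) (Fin N) ℂ)
      (A : Fin M → Matrix (Fin N) (Fin N) ℂ) (B : Fin M → Matrix (Fin N) (Fin q) ℂ)
      (ε : ℝ), 0 < ε ∧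
      ∀ z : EuclideanSpace ℂ (Fin M), ‖z‖ < ε →
        (∀ i l, MvPolynomial.eval (fun k => z k) (Q i l) ≠ 0) ∧
        IsUnit ((1 : Matrix (Fin N) (Fin N) ℂ) - ∑ k, z k • A k) ∧
        (Matrix.of fun i l =>
            MvPolynomial.eval (fun k => z k) (P i l) /
              MvPolynomial.eval (fun k => z k) (Q i l)) =
          D + C * ((1 : Matrix (Fin N) (Fin N) ℂ) - ∑ k, z k • A k)⁻¹ * (∑ k, z k • B k) := by
  obtain ⟨N, D, C, A, B, hf⟩ := Realization.IsRealizable.of_entries fun i l =>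
    Realization.isRealizable_eval_div (P i l) (Q i l) (hQ i l)
  have hQ_near : ∀ᶠ z in 𝓝 (0 : Fin M → ℂ), ∀ i l, MvPolynomial.eval z (Q i l) ≠ 0 :=
    eventually_all.2 fun i => eventually_all.2 fun l =>
      (MvPolynomial.continuous_eval _).continuousAt.eventually_ne (hQ i l)
  have hcoord : Tendsto (fun z : EuclideanSpace ℂ (Fin M) => fun k => z k) (𝓝 0) (𝓝 0) := by
    simpa only [WithLp.ofLp_zero] using (PiLp.continuous_ofLp 2 fun _ : Fin M => ℂ).tendsto 0
  obtain ⟨ε, hε, hball⟩ := Metric.eventually_nhds_iff.1 (hcoord.eventually (hQ_near.and hf))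
  refine ⟨N, D, C, A, B, ε, hε, fun z hz => ?_⟩
  obtain ⟨hQz, hu, hfz⟩ := hball (by simpa using hz)
  exact ⟨hQz, hu, hfz⟩

/-- Every `ℂ^{p×q}`-valued rational function of `M` complex variables which is analytic
at the origin admits a realization `f(z) = D + C (I − Σ z_k A_k)⁻¹ (Σ z_k B_k)`
valid in a neighborhood of the origin. -/
theorem stmt2 (M p q : ℕ) (hM : 1 ≤ M) (hp : 1 ≤ p) (hq : 1 ≤ q)
    (P Q : Fin p → Fin q → MvPolynomial (Fin M) ℂ)
    (hQ : ∀ i l, MvPolynomial.eval (0 : Fin M → ℂ) (Q i l) ≠ 0) :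
    ∃ (N : ℕ) (D : Matrix (Fin p) (Fin q) ℂ) (C : Matrix (Fin p) (Fin N) ℂ)
      (A : Fin M → Matrix (Fin N) (Fin N) ℂ) (B : Fin M → Matrix (Fin N) (Fin q) ℂ)
      (ε : ℝ), 0 < ε ∧
      ∀ z : EuclideanSpace ℂ (Fin M), ‖z‖ < ε →
        (∀ i l, MvPolynomial.eval (fun k => z k) (Q i l) ≠ 0) ∧
        IsUnit ((1 : Matrix (Fin N) (Fin N) ℂ) - ∑ k, z k • A k) ∧
        (Matrix.of fun i l =>
            MvPolynomial.eval (fun k => z k) (P i l) /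
              MvPolynomial.eval (fun k => z k) (Q i l)) =
          D + C * ((1 : Matrix (Fin N) (Fin N) ℂ) - ∑ k, z k • A k)⁻¹ * (∑ k, z k • B k) :=
  stmt2_general M p q P Q hQ
end

section
/- For every M ∈ ℕ, every ε > 0 and every r_0 > 0 there exists q ∈ ℕ such that the following holds: for every sequence z = (z_1, z_2, …) of complex numbers, if the family α ↦ |z|^α (2ℕ)^{qα} := ∏_{j≥1} (|z_j| (2j)^q)^{α_j}, indexed by the nonzero multi-indices α ∈ ℓ, is summable with sum strictly less than r_0^2, then Σ_{k=1}^M |z_k|^2 ≤ ε^2. -/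
/-- For `q` large enough, the Kondratiev neighborhood `K_q(r₀)` (defined by
`Σ_{α ≠ 0} |z|^α (2ℕ)^{qα} < r₀²`) is contained in the closed ball of radius `ε` of the
first `M` coordinates.  Here the variable `z_j` (`j ≥ 1`) is `z (j-1)`, so the weight
`(2j)^q` attached to `z_j` reads `(2(j+1))^q` for the index `j : ℕ`. -/
theorem stmt4 (M : ℕ) (ε r₀ : ℝ) (hε : 0 < ε) (hr : 0 < r₀) :
    ∃ q : ℕ, ∀ z : ℕ → ℂ,
      Summable (fun α : {α : ℕ →₀ ℕ // α ≠ 0} =>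
        α.1.prod fun j n => (‖z j‖ * ((2 * (j + 1) : ℕ) : ℝ) ^ q) ^ n) →
      (∑' α : {α : ℕ →₀ ℕ // α ≠ 0},
          α.1.prod fun j n => (‖z j‖ * ((2 * (j + 1) : ℕ) : ℝ) ^ q) ^ n) < r₀ ^ 2 →
      ∑ k : Fin M, ‖z k‖ ^ 2 ≤ ε ^ 2 := by
  obtain ⟨q, hq⟩ := pow_unbounded_of_one_lt (M * r₀ ^ 2 / ε ^ 2) (by norm_num : (1:ℝ) < 4)
  refine ⟨q, fun z hsum hlt => ?_⟩
  have hnn : ∀ α : {α : ℕ →₀ ℕ // α ≠ 0},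
      0 ≤ α.1.prod fun j n => (‖z j‖ * ((2 * (j + 1) : ℕ) : ℝ) ^ q) ^ n := by
    intro α
    exact Finset.prod_nonneg fun j _ => pow_nonneg (by positivity) _
  -- each coordinate bound
  have key : ∀ k : ℕ, ‖z k‖ ^ 2 * 4 ^ q ≤ r₀ ^ 2 := by
    intro k
    set α : ℕ →₀ ℕ := Finsupp.single k 2 with hα
    have hαne : α ≠ 0 := by
      simp [hα, Finsupp.single_eq_zero]
    have hterm := Summable.le_tsum hsum ⟨α, hαne⟩ (fun b _ => hnn b)
    have hprod : α.prod (fun j n => (‖z j‖ * ((2 * (j + 1) : ℕ) : ℝ) ^ q) ^ n)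
        = (‖z k‖ * ((2 * (k + 1) : ℕ) : ℝ) ^ q) ^ 2 := by
      rw [hα]
      exact Finsupp.prod_single_index (by norm_num)
    have hb : (4:ℝ) ^ q ≤ ((((2 * (k + 1) : ℕ) : ℝ)) ^ q) ^ 2 := by
      rw [← pow_mul, mul_comm q 2, pow_mul]
      apply pow_le_pow_left₀ (by norm_num)
      have : (2:ℝ) ≤ ((2 * (k + 1) : ℕ) : ℝ) := by push_cast; nlinarith [Nat.cast_nonneg (α := ℝ) k]
      nlinarith
    have h1 : ‖z k‖ ^ 2 * 4 ^ q ≤ (‖z k‖ * ((2 * (k + 1) : ℕ) : ℝ) ^ q) ^ 2 := by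
      rw [mul_pow]
      exact mul_le_mul_of_nonneg_left hb (sq_nonneg _)
    calc ‖z k‖ ^ 2 * 4 ^ q ≤ _ := h1
      _ ≤ _ := by rw [← hprod]; exact hterm
      _ ≤ r₀ ^ 2 := hlt.le
  have h4q : (0:ℝ) < 4 ^ q := by positivity
  have hzk : ∀ k : ℕ, ‖z k‖ ^ 2 ≤ r₀ ^ 2 / 4 ^ q := fun k =>
    (le_div_iff₀ h4q).2 (key k)
  calc ∑ k : Fin M, ‖z k‖ ^ 2 ≤ ∑ _k : Fin M, r₀ ^ 2 / 4 ^ q :=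
        Finset.sum_le_sum fun k _ => hzk k
    _ = M * (r₀ ^ 2 / 4 ^ q) := by simp [mul_comm]
    _ ≤ ε ^ 2 := by
        rw [mul_div_assoc']
        rw [div_le_iff₀ h4q]
        have := (div_lt_iff₀ (by positivity : (0:ℝ) < ε ^ 2)).1 hq
        nlinarith [sq_nonneg ε]
end

section
/- Let z = (z_1, z_2, …) and w = (w_1, w_2, …) be elements of ℓ^2(ℕ, ℂ) (square-summable complex sequences). Then the family α ↦ z^α \overline{w}^α / α!, indexed by α ∈ ℓ, is summable and Σ_{α ∈ ℓ} z^α \overline{w}^α / α! = exp(⟨z, w⟩), where ⟨z, w⟩ = Σ_{j≥1} z_j \overline{w_j}. -/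
/-! With `c i = z i * conj (w i)` the summand is `∏ i, c i ^ α i / (α i)!`. Over the multi-indices
supported in a finite set `s` the sum factors, by splitting off one coordinate at a time, as
`∏ i ∈ s, exp (c i) = exp (∑ i ∈ s, c i)`. Since `‖c i‖ ≤ (‖z i‖² + ‖w i‖²) / 2` is summable, the
same computation for `‖c i‖` bounds all partial sums of norms by `exp (∑' i, ‖c i‖)`, and dominated
convergence as `s` exhausts the coordinates identifies the full sum with `exp (∑' i, c i)`. -/

open Finset Filter Topology

section SupportedIn

variable {ι : Type*}

def supportedIn (s : Finset ι) : Set (ι →₀ ℕ) := {α | α.support ⊆ s}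

lemma supportedIn_empty : supportedIn (∅ : Finset ι) = {0} := by
  ext α
  simp [supportedIn]

lemma mem_supportedIn {α : ι →₀ ℕ} {s : Finset ι} : α ∈ supportedIn s ↔ α.support ⊆ s :=
  Iff.rfl

variable [DecidableEq ι] {a : ι} {s : Finset ι}

noncomputable def supportedInInsertEquiv (ha : a ∉ s) :
    ℕ × supportedIn s ≃ supportedIn (insert a s) where
  toFun p := ⟨p.2 + Finsupp.single a p.1, Finsupp.support_add.trans <|
    union_subset (p.2.2.trans (subset_insert a s))
      (Finsupp.support_single_subset.trans (singleton_subset_iff.2 (mem_insert_self a s)))⟩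
  invFun α := (α.1 a, ⟨α.1.erase a, by
    rw [mem_supportedIn, Finsupp.support_erase, ← subset_insert_iff]
    exact α.2⟩)
  left_inv := by
    rintro ⟨n, β, hβ⟩
    have hβa : β a = 0 := Finsupp.notMem_support_iff.1 fun h => ha (hβ h)
    ext
    · simp [hβa]
    · simp [Finsupp.erase_add, Finsupp.erase_of_notMem_support (fun h => ha (hβ h))]
  right_inv α := Subtype.ext (Finsupp.erase_add_single a α.1)

lemma prod_supportedInInsertEquiv {M : Type*} [CommMonoid M] (ha : a ∉ s) {f : ι → ℕ → M}
    (hf : f a 0 = 1) (p : ℕ × supportedIn s) :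
    (supportedInInsertEquiv ha p).1.prod f = f a p.1 * p.2.1.prod f := by
  have hdisj : Disjoint p.2.1.support (Finsupp.single a p.1).support :=
    disjoint_of_subset_right Finsupp.support_single_subset
      (disjoint_singleton_right.2 fun h => ha (p.2.2 h))
  rw [supportedInInsertEquiv, Equiv.coe_fn_mk, Finsupp.prod_add_index_of_disjoint hdisj,
    Finsupp.prod_single_index hf, mul_comm]

end SupportedIn

section ExpSeries

variable {ι 𝕜 : Type*} [DecidableEq ι] [NormedField 𝕜] [CompleteSpace 𝕜]

theorem summable_norm_and_hasSum_prod_supportedIn {f : ι → ℕ → 𝕜}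
    (hf0 : ∀ i, f i 0 = 1) (hf : ∀ i, Summable fun n => ‖f i n‖) (s : Finset ι) :
    (Summable fun α : supportedIn s => ‖α.1.prod f‖) ∧
      HasSum (fun α : supportedIn s => α.1.prod f) (∏ i ∈ s, ∑' n, f i n) := by
  induction s using Finset.induction with
  | empty =>
    rw [prod_empty, supportedIn_empty]
    have h := hasSum_singleton (0 : ι →₀ ℕ) fun α => α.prod f
    rw [Finsupp.prod_zero_index] at h
    exact ⟨.of_finite, h⟩
  | @insert a s ha ih =>
    have hprod := prod_supportedInInsertEquiv ha (hf0 a)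
    have hnorm : Summable fun p => ‖(supportedInInsertEquiv ha p).1.prod f‖ := by
      simpa only [hprod] using (hf a).mul_norm ih.1
    have hfa : HasSum (f a) (∑' n, f a n) := (hf a).of_norm.hasSum
    have hsum : Summable fun p : ℕ × supportedIn s => f a p.1 * p.2.1.prod f :=
      summable_mul_of_summable_norm (g := fun β : supportedIn s => β.1.prod f) (hf a) ih.1
    have hmul := hfa.mul ih.2 hsum
    simp only [← hprod] at hmul
    rw [prod_insert ha]
    exact ⟨(supportedInInsertEquiv ha).summable_iff.1 hnorm,
      (supportedInInsertEquiv ha).hasSum_iff.1 hmul⟩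

theorem hasSum_prod_expSeries_supportedIn [NormedAlgebra ℚ 𝕜] (c : ι → 𝕜) (s : Finset ι) :
    HasSum (fun α : supportedIn s => α.1.prod fun i n => c i ^ n / n.factorial)
      (∏ i ∈ s, NormedSpace.exp (c i)) := by
  simpa only [(NormedSpace.expSeries_div_hasSum_exp _).tsum_eq] using
    (summable_norm_and_hasSum_prod_supportedIn (f := fun i n => c i ^ n / n.factorial) (by simp)
      (fun i => NormedSpace.norm_expSeries_div_summable (c i)) s).2

end ExpSeries

section Complex

variable {ι : Type*}

lemma norm_prod_expSeries (c : ι → ℂ) (α : ι →₀ ℕ) :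
    ‖α.prod fun i n => c i ^ n / n.factorial‖ = α.prod fun i n => ‖c i‖ ^ n / n.factorial := by
  simp only [Finsupp.prod, norm_prod, norm_div, norm_pow, Complex.norm_natCast]

theorem summable_norm_prod_expSeries {c : ι → ℂ} (hc : Summable (‖c ·‖)) :
    Summable fun α : ι →₀ ℕ => ‖α.prod fun i n => c i ^ n / n.factorial‖ := by
  classical
  let g (α : ι →₀ ℕ) : ℝ := α.prod fun i n => ‖c i‖ ^ n / n.factorial
  have hg : 0 ≤ g := fun α => prod_nonneg fun i _ => by positivity
  simp only [norm_prod_expSeries]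
  refine summable_of_sum_le (c := Real.exp (∑' i, ‖c i‖)) hg fun T => ?_
  let s := T.sup Finsupp.support
  have hs : HasSum ((supportedIn s).indicator g) (∏ i ∈ s, NormedSpace.exp ‖c i‖) :=
    hasSum_subtype_iff_indicator.1 (hasSum_prod_expSeries_supportedIn _ s)
  calc ∑ α ∈ T, g α
      = ∑ α ∈ T, (supportedIn s).indicator g α :=
        sum_congr rfl fun α hα => (Set.indicator_of_mem (mem_supportedIn.2 (le_sup hα)) g).symm
    _ ≤ ∏ i ∈ s, NormedSpace.exp ‖c i‖ :=
        sum_le_hasSum T (fun α _ => Set.indicator_nonneg (fun α _ => hg α) α) hs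
    _ = Real.exp (∑ i ∈ s, ‖c i‖) := by rw [← Real.exp_eq_exp_ℝ, Real.exp_sum]
    _ ≤ Real.exp (∑' i, ‖c i‖) := Real.exp_le_exp.2 (hc.sum_le_tsum s fun i _ => norm_nonneg _)

theorem hasSum_prod_expSeries {c : ι → ℂ} (hc : Summable (‖c ·‖)) :
    HasSum (fun α : ι →₀ ℕ => α.prod fun i n => c i ^ n / n.factorial)
      (Complex.exp (∑' i, c i)) := by
  classical
  let g := fun α : ι →₀ ℕ => α.prod fun i n => c i ^ n / n.factorial
  have hg : Summable (‖g ·‖) := summable_norm_prod_expSeries hc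
  have hpartial (s : Finset ι) :
      ∑' α, (supportedIn s).indicator g α = Complex.exp (∑ i ∈ s, c i) := by
    rw [← _root_.tsum_subtype, (hasSum_prod_expSeries_supportedIn c s).tsum_eq,
      ← Complex.exp_eq_exp_ℂ, Complex.exp_sum]
  have hlim : Tendsto (fun s : Finset ι => ∑' α, (supportedIn s).indicator g α) atTop
      (𝓝 (∑' α, g α)) :=
    tendsto_tsum_of_dominated_convergence hg
      (fun α => tendsto_const_nhds.congr' <| (eventually_ge_atTop α.support).mono
        fun s hs => (Set.indicator_of_mem (mem_supportedIn.2 hs) g).symm)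
      (.of_forall fun s α => norm_indicator_le_norm_self g α)
  have hexp : Tendsto (fun s : Finset ι => Complex.exp (∑ i ∈ s, c i)) atTop
      (𝓝 (Complex.exp (∑' i, c i))) :=
    (Complex.continuous_exp.tendsto _).comp hc.of_norm.hasSum
  rw [← tendsto_nhds_unique (hlim.congr hpartial) hexp]
  exact hg.of_norm.hasSum

end Complex

/-- The reproducing kernel of the Fock space:
`Σ_{α ∈ ℓ} z^α conj(w)^α / α! = exp(⟨z,w⟩_{ℓ₂})` for square-summable sequences `z, w`. -/
theorem stmt5 (z w : ℕ → ℂ)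
    (hz : Summable fun j => ‖z j‖ ^ 2) (hw : Summable fun j => ‖w j‖ ^ 2) :
    Summable (fun α : ℕ →₀ ℕ =>
      (α.prod fun j n => (z j) ^ n) * (α.prod fun j n => ((starRingEnd ℂ) (w j)) ^ n) /
        (α.prod fun _ n => (n.factorial : ℂ))) ∧
    (∑' α : ℕ →₀ ℕ,
        (α.prod fun j n => (z j) ^ n) * (α.prod fun j n => ((starRingEnd ℂ) (w j)) ^ n) /
          (α.prod fun _ n => (n.factorial : ℂ))) =
      Complex.exp (∑' j : ℕ, z j * (starRingEnd ℂ) (w j)) := by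
  have hc : Summable fun j => ‖z j * starRingEnd ℂ (w j)‖ := by
    refine ((hz.add hw).div_const 2).of_nonneg_of_le (fun _ => norm_nonneg _) fun j => ?_
    rw [norm_mul, Complex.norm_conj]
    linarith [two_mul_le_add_sq ‖z j‖ ‖w j‖]
  have hterm (α : ℕ →₀ ℕ) :
      (α.prod fun j n => z j ^ n) * (α.prod fun j n => starRingEnd ℂ (w j) ^ n) /
          (α.prod fun _ n => (n.factorial : ℂ)) =
        α.prod fun j n => (z j * starRingEnd ℂ (w j)) ^ n / n.factorial := by
    simp only [Finsupp.prod, ← prod_mul_distrib, ← prod_div_distrib, mul_pow]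
  simp only [hterm]
  exact ⟨(hasSum_prod_expSeries hc).summable, (hasSum_prod_expSeries hc).tsum_eq⟩
end

section
/- Let z = (z_1, z_2, …) and w = (w_1, w_2, …) be elements of ℓ^2(ℕ, ℂ) with ‖z‖ < 1 and ‖w‖ < 1. Then ⟨z,w⟩ = Σ_{j≥1} z_j \overline{w_j} satisfies |⟨z,w⟩| < 1, the family α ↦ (|α|!/α!) z^α \overline{w}^α, indexed by α ∈ ℓ, is summable, and Σ_{α ∈ ℓ} (|α|!/α!) z^α \overline{w}^α = (1 − ⟨z, w⟩)^{−1}. -/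
/-!
Put `u j = z j * conj (w j)`; by AM-GM, `∑ ‖u j‖ ≤ (‖z‖² + ‖w‖²) / 2 < 1`. On a finite set `s` of
coordinates, the multinomial theorem groups the terms with `|α| = n` into `(∑ j ∈ s, u j) ^ n`, so
the terms supported in `s` sum to the geometric series `(1 - ∑ j ∈ s, u j)⁻¹`. The same computation
for `‖u j‖` bounds the whole family absolutely, and dominated convergence as `s` exhausts the
index set gives the sum `(1 - ∑' j, u j)⁻¹`.
-/

open Finset Filter Topology Nat

theorem Finsupp.cast_multinomial {ι K : Type*} [Field K] [CharZero K] (α : ι →₀ ℕ) :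
    (α.multinomial : K) = ((α.sum fun _ n => n)! : K) / α.prod fun _ n => (n ! : K) := by
  have hspec : ((∏ i ∈ α.support, (α i)! : ℕ) : K) * α.multinomial =
      ((α.sum fun _ n => n)! : ℕ) := by
    exact_mod_cast Nat.multinomial_spec α.support α
  rw [eq_div_iff, mul_comm]
  · simpa [Finsupp.prod] using hspec
  · simp [Finsupp.prod, Finset.prod_ne_zero_iff, Nat.factorial_ne_zero]

/-- `(|α|! / α!) u^α`; for `u j = z j * conj (w j)` it is the term `(|α|! / α!) z^α conj(w)^α`. -/
noncomputable def multinomialTerm {ι R : Type*} [CommSemiring R] (u : ι → R) (α : ι →₀ ℕ) : R :=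
  α.multinomial * α.prod fun j m => u j ^ m

section
variable {ι R : Type*} [DecidableEq ι] [CommSemiring R]

theorem sum_pow_eq_sum_finsuppAntidiag (s : Finset ι) (u : ι → R) (n : ℕ) :
    (∑ j ∈ s, u j) ^ n = ∑ α ∈ s.finsuppAntidiag n, multinomialTerm u α := by
  rw [sum_pow_eq_sum_piAntidiag, finsuppAntidiag, sum_map, ← sum_attach]
  refine sum_congr rfl fun k _ => ?_
  simp only [multinomialTerm]
  rw [Finsupp.multinomial_eq_of_support_subset (s := s) (filter_subset _ _),
    Finsupp.prod_of_support_subset _ (s := s) (filter_subset _ _) _ (by simp)]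
  rfl

theorem hasSum_multinomialTerm_finsuppAntidiag [TopologicalSpace R] (s : Finset ι) (u : ι → R)
    (n : ℕ) :
    HasSum (fun α : s.finsuppAntidiag n => multinomialTerm u α) ((∑ j ∈ s, u j) ^ n) := by
  rw [sum_pow_eq_sum_finsuppAntidiag]
  exact Finset.hasSum _ _

end

section
variable {ι 𝕜 : Type*} [NormedField 𝕜]

theorem norm_multinomialTerm_le (u : ι → 𝕜) (α : ι →₀ ℕ) :
    ‖multinomialTerm u α‖ ≤ multinomialTerm (‖u ·‖) α := by
  rw [multinomialTerm, multinomialTerm, norm_mul, Finsupp.prod, Finsupp.prod, norm_prod]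
  simp only [norm_pow]
  gcongr
  simpa using Nat.norm_cast_le (α := 𝕜) α.multinomial

theorem multinomialTerm_nonneg {v : ι → ℝ} (hv : ∀ j, 0 ≤ v j) (α : ι →₀ ℕ) :
    0 ≤ multinomialTerm v α :=
  mul_nonneg (Nat.cast_nonneg _) (prod_nonneg fun j _ => pow_nonneg (hv j) _)

theorem hasSum_indicator_multinomialTerm [CompleteSpace 𝕜] {u : ι → 𝕜} (s : Finset ι)
    (hs : ∑ j ∈ s, ‖u j‖ < 1) :
    HasSum ({α : ι →₀ ℕ | α.support ⊆ s}.indicator (multinomialTerm u))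
      (1 - ∑ j ∈ s, u j)⁻¹ := by
  classical
  let e : (Σ n : ℕ, s.finsuppAntidiag n) ≃ {α : ι →₀ ℕ | α.support ⊆ s} :=
    { toFun p := ⟨p.2, (mem_finsuppAntidiag.1 p.2.2).2⟩
      invFun α := ⟨s.sum α, α, mem_finsuppAntidiag.2 ⟨rfl, α.2⟩⟩
      left_inv := by
        rintro ⟨n, α, hα⟩
        obtain rfl := (mem_finsuppAntidiag.1 hα).1
        rfl
      right_inv _ := rfl }
  have hnorm : Summable fun p : Σ n : ℕ, s.finsuppAntidiag n => multinomialTerm (‖u ·‖) p.2 := by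
    refine (summable_sigma_of_nonneg fun p => multinomialTerm_nonneg (fun _ => norm_nonneg _) _).2
      ⟨fun n => (hasSum_multinomialTerm_finsuppAntidiag s _ n).summable, ?_⟩
    simp only [(hasSum_multinomialTerm_finsuppAntidiag s _ _).tsum_eq]
    exact summable_geometric_of_lt_one (sum_nonneg fun _ _ => norm_nonneg _) hs
  have hsigma : HasSum (fun p : Σ n : ℕ, s.finsuppAntidiag n => multinomialTerm u p.2)
      (1 - ∑ j ∈ s, u j)⁻¹ :=
    (hasSum_geometric_of_norm_lt_one ((norm_sum_le _ _).trans_lt hs)).sigma_of_hasSum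
      (hasSum_multinomialTerm_finsuppAntidiag s u)
      (hnorm.of_norm_bounded fun p => norm_multinomialTerm_le u p.2)
  exact hasSum_subtype_iff_indicator.1 (e.hasSum_iff.1 hsigma)

theorem summable_multinomialTerm_norm {u : ι → 𝕜} (hu : Summable (‖u ·‖))
    (h : ∑' j, ‖u j‖ < 1) : Summable (multinomialTerm (‖u ·‖)) := by
  refine summable_of_sum_le (c := (1 - ∑' j, ‖u j‖)⁻¹)
    (fun α => multinomialTerm_nonneg (fun _ => norm_nonneg _) α) fun T => ?_
  classical
  set s := T.biUnion Finsupp.support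
  have hs : ∑ j ∈ s, ‖u j‖ ≤ ∑' j, ‖u j‖ := hu.sum_le_tsum s fun _ _ => norm_nonneg _
  have hsum := hasSum_indicator_multinomialTerm (u := (‖u ·‖)) s (by simpa using hs.trans_lt h)
  calc ∑ α ∈ T, multinomialTerm (‖u ·‖) α
      = ∑ α ∈ T, {α : ι →₀ ℕ | α.support ⊆ s}.indicator (multinomialTerm (‖u ·‖)) α :=
        sum_congr rfl fun α hα => (Set.indicator_of_mem (subset_biUnion_of_mem _ hα) _).symm
    _ ≤ (1 - ∑ j ∈ s, ‖u j‖)⁻¹ :=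
        sum_le_hasSum T (fun α _ => Set.indicator_nonneg
          (fun α _ => multinomialTerm_nonneg (fun _ => norm_nonneg _) α) α) hsum
    _ ≤ (1 - ∑' j, ‖u j‖)⁻¹ := by gcongr

theorem hasSum_multinomialTerm [CompleteSpace 𝕜] {u : ι → 𝕜} (hu : Summable (‖u ·‖))
    (h : ∑' j, ‖u j‖ < 1) :
    HasSum (multinomialTerm u) (1 - ∑' j, u j)⁻¹ := by
  have hnorm := summable_multinomialTerm_norm hu h
  have hsum : Summable (multinomialTerm u) :=
    hnorm.of_norm_bounded (norm_multinomialTerm_le u)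
  have hne : 1 - ∑' j, u j ≠ 0 := by
    refine sub_ne_zero.2 fun h1 => ?_
    simpa [← h1] using (norm_tsum_le_tsum_norm hu).trans_lt h
  have hpartial : Tendsto (fun s : Finset ι => ∑' α,
      {α : ι →₀ ℕ | α.support ⊆ s}.indicator (multinomialTerm u) α) atTop
      (𝓝 (∑' α, multinomialTerm u α)) := by
    refine tendsto_tsum_of_dominated_convergence hnorm (fun α => ?_)
      (Eventually.of_forall fun s α => ?_)
    · refine tendsto_const_nhds.congr' ?_
      filter_upwards [eventually_ge_atTop α.support] with s hs
      exact (Set.indicator_of_mem hs _).symm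
    · exact (norm_indicator_le_norm_self _ _).trans (norm_multinomialTerm_le u α)
  have hlimit : Tendsto (fun s : Finset ι => (1 - ∑ j ∈ s, u j)⁻¹) atTop
      (𝓝 (1 - ∑' j, u j)⁻¹) :=
    (tendsto_const_nhds.sub hu.of_norm.hasSum).inv₀ hne
  refine hsum.hasSum_iff.2 (tendsto_nhds_unique (hpartial.congr fun s => ?_) hlimit)
  have hs : ∑ j ∈ s, ‖u j‖ < 1 := (hu.sum_le_tsum s fun _ _ => norm_nonneg _).trans_lt h
  exact (hasSum_indicator_multinomialTerm s hs).tsum_eq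

end

theorem summable_mul_and_tsum_mul_le_of_sq {ι : Type*} {a b : ι → ℝ} (ha : Summable (a · ^ 2))
    (hb : Summable (b · ^ 2)) :
    Summable (fun j => a j * b j) ∧ ∑' j, a j * b j ≤ (∑' j, a j ^ 2 + ∑' j, b j ^ 2) / 2 := by
  have hbound : Summable fun j => (a j ^ 2 + b j ^ 2) / 2 := (ha.add hb).div_const 2
  have hsum : Summable fun j => a j * b j := hbound.of_norm_bounded fun j => by
    rw [Real.norm_eq_abs, abs_le]
    constructor <;> nlinarith [sq_nonneg (a j - b j), sq_nonneg (a j + b j)]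
  refine ⟨hsum, ?_⟩
  rw [← ha.tsum_add hb, ← tsum_div_const]
  exact hsum.tsum_le_tsum (fun j => by nlinarith [sq_nonneg (a j - b j)]) hbound

/-- The reproducing kernel of the Arveson space on the unit ball of `ℓ₂`:
for `‖z‖ < 1`, `‖w‖ < 1` one has `|⟨z,w⟩| < 1` and
`Σ_{α ∈ ℓ} (|α|!/α!) z^α conj(w)^α = (1 − ⟨z,w⟩)⁻¹`. -/
theorem stmt6 (z w : ℕ → ℂ)
    (hz : Summable fun j => ‖z j‖ ^ 2) (hw : Summable fun j => ‖w j‖ ^ 2)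
    (hz1 : (∑' j : ℕ, ‖z j‖ ^ 2) < 1) (hw1 : (∑' j : ℕ, ‖w j‖ ^ 2) < 1) :
    ‖∑' j : ℕ, z j * (starRingEnd ℂ) (w j)‖ < 1 ∧
    Summable (fun α : ℕ →₀ ℕ =>
      (((α.sum fun _ n => n).factorial : ℂ) / (α.prod fun _ n => (n.factorial : ℂ))) *
        (α.prod fun j n => (z j) ^ n) * (α.prod fun j n => ((starRingEnd ℂ) (w j)) ^ n)) ∧
    (∑' α : ℕ →₀ ℕ,
        (((α.sum fun _ n => n).factorial : ℂ) / (α.prod fun _ n => (n.factorial : ℂ))) *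
          (α.prod fun j n => (z j) ^ n) * (α.prod fun j n => ((starRingEnd ℂ) (w j)) ^ n)) =
      (1 - ∑' j : ℕ, z j * (starRingEnd ℂ) (w j))⁻¹ := by
  set u : ℕ → ℂ := fun j => z j * (starRingEnd ℂ) (w j)
  have hnorm_u : (fun j => ‖z j‖ * ‖w j‖) = (‖u ·‖) := funext fun j => by simp [u]
  obtain ⟨hu, hu_le⟩ := summable_mul_and_tsum_mul_le_of_sq hz hw
  rw [hnorm_u] at hu hu_le
  have hu1 : ∑' j, ‖u j‖ < 1 := by linarith
  have H := hasSum_multinomialTerm hu hu1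
  simp_rw [← Finsupp.cast_multinomial, mul_assoc, ← Finsupp.prod_mul, ← mul_pow]
  exact ⟨(norm_tsum_le_tsum_norm hu).trans_lt hu1, H.summable, H.tsum_eq⟩
end

section
/- Let p, r, q, N_1, N_2 ≥ 1 and let D_1 ∈ ℂ^{p×r}, C_1 ∈ ℂ^{p×N_1}, P_1 ∈ ℂ^{N_1×N_1}, Q_1 ∈ ℂ^{N_1×r}, D_2 ∈ ℂ^{r×q}, C_2 ∈ ℂ^{r×N_2}, P_2 ∈ ℂ^{N_2×N_2}, Q_2 ∈ ℂ^{N_2×q}, and assume I_{N_1} − P_1 and I_{N_2} − P_2 are invertible. Then the block matrix [[I_{N_1} − P_1, −Q_1 C_2], [0, I_{N_2} − P_2]] is invertible and (D_1 + C_1 (I_{N_1} − P_1)^{−1} Q_1)(D_2 + C_2 (I_{N_2} − P_2)^{−1} Q_2) = D_1 D_2 + [C_1 D_1 C_2] · [[I_{N_1} − P_1, −Q_1 C_2], [0, I_{N_2} − P_2]]^{−1} · [Q_1 D_2; Q_2], where [C_1 D_1 C_2] is the p×(N_1+N_2) block row and [Q_1 D_2; Q_2] is the (N_1+N_2)×q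 block column. -/
/-! The inverse of the block upper-triangular matrix `[[1 - P₁, -Q₁C₂], [0, 1 - P₂]]` is
`[[(1 - P₁)⁻¹, (1 - P₁)⁻¹Q₁C₂(1 - P₂)⁻¹], [0, (1 - P₂)⁻¹]]`; multiplying out, its off-diagonal
block produces exactly the cross term `C₁(1 - P₁)⁻¹Q₁ · C₂(1 - P₂)⁻¹Q₂` of the product. -/

namespace Matrix

variable {α m n k l₁ l₂ : Type*}

theorem one_sub_fromBlocks [Ring α] [DecidableEq l₁] [DecidableEq l₂] (A : Matrix l₁ l₁ α)
    (B : Matrix l₁ l₂ α) (C : Matrix l₂ l₁ α) (D : Matrix l₂ l₂ α) :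
    1 - fromBlocks A B C D = fromBlocks (1 - A) (-B) (-C) (1 - D) := by
  rw [← fromBlocks_one, sub_eq_add_neg, fromBlocks_neg, fromBlocks_add]
  simp only [← sub_eq_add_neg, zero_sub]

variable [CommRing α] [Fintype l₁] [DecidableEq l₁]

noncomputable def realization (D : Matrix m k α) (C : Matrix m l₁ α) (P : Matrix l₁ l₁ α)
    (Q : Matrix l₁ k α) : Matrix m k α :=
  D + C * (1 - P)⁻¹ * Q

variable [Fintype l₂] [DecidableEq l₂] [Fintype n]

theorem realization_mul_realization (D₁ : Matrix m n α) (C₁ : Matrix m l₁ α)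
    (P₁ : Matrix l₁ l₁ α) (Q₁ : Matrix l₁ n α) (D₂ : Matrix n k α) (C₂ : Matrix n l₂ α)
    (P₂ : Matrix l₂ l₂ α) (Q₂ : Matrix l₂ k α) (h₁ : IsUnit (1 - P₁)) (h₂ : IsUnit (1 - P₂)) :
    realization D₁ C₁ P₁ Q₁ * realization D₂ C₂ P₂ Q₂ =
      realization (D₁ * D₂) (fromCols C₁ (D₁ * C₂)) (fromBlocks P₁ (Q₁ * C₂) 0 P₂)
        (fromRows (Q₁ * D₂) Q₂) := by
  simp only [realization]
  rw [one_sub_fromBlocks, neg_zero,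
    inv_fromBlocks_zero₂₁_of_isUnit_iff _ _ _ (iff_of_true h₁ h₂),
    fromCols_mul_fromBlocks, fromCols_mul_fromRows]
  simp only [Matrix.mul_zero, add_zero, Matrix.mul_neg, Matrix.neg_mul, neg_neg,
    Matrix.add_mul, Matrix.mul_add, Matrix.mul_assoc]
  abel

end Matrix

theorem stmt9_general (p r q N₁ N₂ : ℕ)
    (D₁ : Matrix (Fin p) (Fin r) ℂ) (C₁ : Matrix (Fin p) (Fin N₁) ℂ)
    (P₁ : Matrix (Fin N₁) (Fin N₁) ℂ) (Q₁ : Matrix (Fin N₁) (Fin r) ℂ)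
    (D₂ : Matrix (Fin r) (Fin q) ℂ) (C₂ : Matrix (Fin r) (Fin N₂) ℂ)
    (P₂ : Matrix (Fin N₂) (Fin N₂) ℂ) (Q₂ : Matrix (Fin N₂) (Fin q) ℂ)
    (h1 : IsUnit ((1 : Matrix (Fin N₁) (Fin N₁) ℂ) - P₁))
    (h2 : IsUnit ((1 : Matrix (Fin N₂) (Fin N₂) ℂ) - P₂)) :
    IsUnit (Matrix.fromBlocks (1 - P₁) (-(Q₁ * C₂)) 0 (1 - P₂)) ∧
    (D₁ + C₁ * ((1 : Matrix (Fin N₁) (Fin N₁) ℂ) - P₁)⁻¹ * Q₁) *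
        (D₂ + C₂ * ((1 : Matrix (Fin N₂) (Fin N₂) ℂ) - P₂)⁻¹ * Q₂) =
      D₁ * D₂ +
        Matrix.fromCols C₁ (D₁ * C₂) *
          (Matrix.fromBlocks (1 - P₁) (-(Q₁ * C₂)) 0 (1 - P₂))⁻¹ *
          Matrix.fromRows (Q₁ * D₂) Q₂ := by
  refine ⟨Matrix.isUnit_fromBlocks_zero₂₁.mpr ⟨h1, h2⟩, ?_⟩
  simpa only [Matrix.realization, Matrix.one_sub_fromBlocks, neg_zero] using
    Matrix.realization_mul_realization D₁ C₁ P₁ Q₁ D₂ C₂ P₂ Q₂ h1 h2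

/-- Cascade (product) formula for realizations: the product of
`D₁ + C₁(I−P₁)⁻¹Q₁` and `D₂ + C₂(I−P₂)⁻¹Q₂` is
`D₁D₂ + [C₁  D₁C₂] [[I−P₁, −Q₁C₂],[0, I−P₂]]⁻¹ [Q₁D₂; Q₂]`. -/
theorem stmt9 (p r q N₁ N₂ : ℕ) (hp : 1 ≤ p) (hr : 1 ≤ r) (hq : 1 ≤ q)
    (hN₁ : 1 ≤ N₁) (hN₂ : 1 ≤ N₂)
    (D₁ : Matrix (Fin p) (Fin r) ℂ) (C₁ : Matrix (Fin p) (Fin N₁) ℂ)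
    (P₁ : Matrix (Fin N₁) (Fin N₁) ℂ) (Q₁ : Matrix (Fin N₁) (Fin r) ℂ)
    (D₂ : Matrix (Fin r) (Fin q) ℂ) (C₂ : Matrix (Fin r) (Fin N₂) ℂ)
    (P₂ : Matrix (Fin N₂) (Fin N₂) ℂ) (Q₂ : Matrix (Fin N₂) (Fin q) ℂ)
    (h1 : IsUnit ((1 : Matrix (Fin N₁) (Fin N₁) ℂ) - P₁))
    (h2 : IsUnit ((1 : Matrix (Fin N₂) (Fin N₂) ℂ) - P₂)) :
    IsUnit (Matrix.fromBlocks (1 - P₁) (-(Q₁ * C₂)) 0 (1 - P₂)) ∧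
    (D₁ + C₁ * ((1 : Matrix (Fin N₁) (Fin N₁) ℂ) - P₁)⁻¹ * Q₁) *
        (D₂ + C₂ * ((1 : Matrix (Fin N₂) (Fin N₂) ℂ) - P₂)⁻¹ * Q₂) =
      D₁ * D₂ +
        Matrix.fromCols C₁ (D₁ * C₂) *
          (Matrix.fromBlocks (1 - P₁) (-(Q₁ * C₂)) 0 (1 - P₂))⁻¹ *
          Matrix.fromRows (Q₁ * D₂) Q₂ :=
  stmt9_general p r q N₁ N₂ D₁ C₁ P₁ Q₁ D₂ C₂ P₂ Q₂ h1 h2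
end

section
/- Fix k ≥ 1 and let f : ℓ → ℂ be such that the family α ↦ (α!/|α|!) |f_α|^2 is summable. Define M_k f : ℓ → ℂ by (M_k f)_α = f_{α − e_k} if α_k ≥ 1 and (M_k f)_α = 0 otherwise. Then the family α ↦ (α!/|α|!) |(M_k f)_α|^2 is summable and Σ_{α ∈ ℓ} (α!/|α|!) |(M_k f)_α|^2 ≤ Σ_{α ∈ ℓ} (α!/|α|!) |f_α|^2. -/
open Finsupp

private noncomputable def wt (α : ℕ →₀ ℕ) : ℝ :=
  (α.prod fun _ n => (n.factorial : ℝ)) / ((α.sum fun _ n => n).factorial : ℝ)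

private lemma wt_nonneg (α : ℕ →₀ ℕ) : 0 ≤ wt α := by
  apply div_nonneg
  · exact Finset.prod_nonneg fun i _ => by positivity
  · positivity

private lemma wt_prod_pos (α : ℕ →₀ ℕ) :
    0 < α.prod fun _ n => (n.factorial : ℝ) :=
  Finset.prod_pos fun i _ => by positivity

private lemma sum_add_single (k : ℕ) (β : ℕ →₀ ℕ) :
    ((β + Finsupp.single k 1).sum fun _ n => n) = (β.sum fun _ n => n) + 1 := by
  rw [Finsupp.sum_add_index' (fun _ => rfl) (fun _ b c => rfl),
    Finsupp.sum_single_index rfl]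

private lemma k_le_sum (k : ℕ) (β : ℕ →₀ ℕ) : β k ≤ β.sum fun _ n => n := by
  by_cases h : β k = 0
  · simp [h]
  · exact Finset.single_le_sum (fun i _ => Nat.zero_le _)
      (Finsupp.mem_support_iff.mpr h)

private lemma prod_add_single (k : ℕ) (β : ℕ →₀ ℕ) :
    ((β + Finsupp.single k 1).prod fun _ n => (n.factorial : ℝ)) =
      ((β k + 1) : ℝ) * (β.prod fun _ n => (n.factorial : ℝ)) := by
  have hks : k ∈ (β + Finsupp.single k 1).support := by
    rw [Finsupp.mem_support_iff]; simp
  have hsub : β.support ⊆ (β + Finsupp.single k 1).support := by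
    intro j hj
    rw [Finsupp.mem_support_iff] at hj ⊢
    rw [Finsupp.add_apply]
    omega
  have h2 : (β.prod fun _ n => (n.factorial : ℝ)) =
      ∏ j ∈ (β + Finsupp.single k 1).support, ((β j).factorial : ℝ) :=
    Finsupp.prod_of_support_subset β hsub _ (fun i _ => by simp)
  rw [Finsupp.prod, h2, ← Finset.mul_prod_erase _ _ hks, ← Finset.mul_prod_erase _ _ hks]
  have hval : ((β + Finsupp.single k 1 : ℕ →₀ ℕ)) k = β k + 1 := by simp
  have hrest : ∀ j ∈ (β + Finsupp.single k 1).support.erase k,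
      (((β + Finsupp.single k 1 : ℕ →₀ ℕ) j).factorial : ℝ) = ((β j).factorial : ℝ) := by
    intro j hj
    have hne : j ≠ k := Finset.ne_of_mem_erase hj
    rw [Finsupp.add_apply, Finsupp.single_apply, if_neg (fun h => hne h.symm)]
    simp
  rw [Finset.prod_congr rfl hrest, hval, Nat.factorial_succ]
  push_cast
  ring

private lemma wt_add_single_le (k : ℕ) (β : ℕ →₀ ℕ) :
    wt (β + Finsupp.single k 1) ≤ wt β := by
  unfold wt
  rw [prod_add_single, sum_add_single, Nat.factorial_succ]
  set P := β.prod fun _ n => (n.factorial : ℝ) with hP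
  set S := β.sum fun _ n => n with hS
  have hPpos := wt_prod_pos β
  rw [← hP] at hPpos
  have hfac : (0:ℝ) < (S.factorial : ℝ) := by positivity
  rw [div_le_div_iff₀ (by positivity) hfac]
  push_cast
  have h1 : (β k : ℝ) + 1 ≤ (S : ℝ) + 1 := by
    have := k_le_sum k β
    rw [← hS] at this
    exact_mod_cast Nat.succ_le_succ this
  nlinarith [mul_le_mul_of_nonneg_right h1 (le_of_lt (mul_pos hPpos hfac))]

/-- Multiplication by the variable `z_k` is a contraction on the Arveson space, written in
coefficient form: the norm `‖f‖² = Σ_α (α!/|α|!) |f_α|²` does not increase under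
`(M_k f)_α = f_{α − e_k}` (for `α_k ≥ 1`, and `0` otherwise). -/
theorem stmt10 (k : ℕ) (f : (ℕ →₀ ℕ) → ℂ)
    (hf : Summable fun α : ℕ →₀ ℕ =>
      (α.prod fun _ n => (n.factorial : ℝ)) / ((α.sum fun _ n => n).factorial : ℝ) *
        ‖f α‖ ^ 2) :
    Summable (fun α : ℕ →₀ ℕ =>
      (α.prod fun _ n => (n.factorial : ℝ)) / ((α.sum fun _ n => n).factorial : ℝ) *
        ‖if 1 ≤ α k then f (α - Finsupp.single k 1) else 0‖ ^ 2) ∧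
    (∑' α : ℕ →₀ ℕ,
        (α.prod fun _ n => (n.factorial : ℝ)) / ((α.sum fun _ n => n).factorial : ℝ) *
          ‖if 1 ≤ α k then f (α - Finsupp.single k 1) else 0‖ ^ 2) ≤
      ∑' α : ℕ →₀ ℕ,
        (α.prod fun _ n => (n.factorial : ℝ)) / ((α.sum fun _ n => n).factorial : ℝ) *
          ‖f α‖ ^ 2 := by
  set F : (ℕ →₀ ℕ) → ℝ := fun α => wt α * ‖f α‖ ^ 2 with hF
  set g : (ℕ →₀ ℕ) → ℝ := fun α =>
    wt α * ‖if 1 ≤ α k then f (α - Finsupp.single k 1) else 0‖ ^ 2 with hg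
  have hFe : (fun α : ℕ →₀ ℕ =>
      (α.prod fun _ n => (n.factorial : ℝ)) / ((α.sum fun _ n => n).factorial : ℝ) *
        ‖f α‖ ^ 2) = F := rfl
  have hge : (fun α : ℕ →₀ ℕ =>
      (α.prod fun _ n => (n.factorial : ℝ)) / ((α.sum fun _ n => n).factorial : ℝ) *
        ‖if 1 ≤ α k then f (α - Finsupp.single k 1) else 0‖ ^ 2) = g := rfl
  rw [hFe] at hf
  rw [hge, hFe]
  set e : (ℕ →₀ ℕ) → (ℕ →₀ ℕ) := fun β => β + Finsupp.single k 1 with he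
  have hinj : Function.Injective e := add_left_injective _
  have hge' : ∀ β, g (e β) = wt (e β) * ‖f β‖ ^ 2 := by
    intro β
    have h1 : 1 ≤ (e β) k := by simp [he]
    have h2 : e β - Finsupp.single k 1 = β := add_tsub_cancel_right β _
    simp [hg, h1, h2]
  have hle : ∀ β, g (e β) ≤ F β := by
    intro β
    rw [hge']
    exact mul_le_mul_of_nonneg_right (wt_add_single_le k β) (by positivity)
  have hgnonneg : ∀ α, 0 ≤ g α := fun α =>
    mul_nonneg (wt_nonneg α) (by positivity)
  have hzero : ∀ α ∉ Set.range e, g α = 0 := by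
    intro α hα
    by_cases h : 1 ≤ α k
    · exfalso
      apply hα
      refine ⟨α - Finsupp.single k 1, ?_⟩
      simp only [he]
      exact tsub_add_cancel_of_le (Finsupp.single_le_iff.mpr h)
    · simp [hg, h]
  have hsumcomp : Summable (g ∘ e) :=
    Summable.of_nonneg_of_le (fun β => hgnonneg _) hle hf
  have hsumg : Summable g := (hinj.summable_iff hzero).mp hsumcomp
  refine ⟨hsumg, ?_⟩
  have htsum : ∑' β, g (e β) = ∑' α, g α := by
    apply hinj.tsum_eq
    intro α hα
    by_contra hr
    exact hα (hzero α hr)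
  rw [← htsum]
  exact Summable.tsum_le_tsum hle hsumcomp hf
end

section
/- Fix j ≥ 1 and let f : ℓ → ℂ be such that the family α ↦ α! |f_α|^2 is summable. Define 𝓡_j f : ℓ → ℂ by (𝓡_j f)_β = ((β_j + 1)/(|β| + 1)) f_{β + e_j}. Then the family β ↦ β! |(𝓡_j f)_β|^2 is summable and Σ_{β ∈ ℓ} β! |(𝓡_j f)_β|^2 ≤ Σ_{α ∈ ℓ} α! |f_α|^2. -/
open Finset in
lemma stmt11_aux (j : ℕ) (β : ℕ →₀ ℕ) :
    ((β + Finsupp.single j 1).prod fun _ n => (n.factorial : ℝ)) =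
      ((β j : ℝ) + 1) * (β.prod fun _ n => (n.factorial : ℝ)) := by
  classical
  set α := β + Finsupp.single j 1 with hα
  have hsupp : α.support = insert j β.support := by
    ext a
    by_cases h : a = j
    · subst h; simp [hα]
    · simp [hα, Finsupp.mem_support_iff, Finsupp.add_apply, Finsupp.single_apply, h, Ne.symm h]
  have hαj : α j = β j + 1 := by simp [hα]
  have hαa : ∀ a, a ≠ j → α a = β a := by
    intro a ha; simp [hα, Finsupp.single_apply, Ne.symm ha]
  have h1 : α.prod (fun _ n => (n.factorial : ℝ)) =
      ((β j + 1).factorial : ℝ) * ∏ a ∈ β.support.erase j, ((β a).factorial : ℝ) := by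
    rw [Finsupp.prod, hsupp, ← Finset.insert_erase (Finset.mem_insert_self j β.support),
      Finset.prod_insert (Finset.notMem_erase _ _), Finset.erase_insert_eq_erase, hαj]
    congr 1
    exact Finset.prod_congr rfl fun a ha => by rw [hαa a (Finset.ne_of_mem_erase ha)]
  have h2 : β.prod (fun _ n => (n.factorial : ℝ)) =
      ((β j).factorial : ℝ) * ∏ a ∈ β.support.erase j, ((β a).factorial : ℝ) := by
    rw [Finsupp.prod]
    by_cases hj : j ∈ β.support
    · rw [← Finset.mul_prod_erase _ _ hj]
    · rw [Finsupp.notMem_support_iff.mp hj, Finset.erase_eq_of_notMem hj]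
      simp
  rw [h1, h2, Nat.factorial_succ]
  push_cast
  ring

/-- The Leibenzon backward-shift operator
`(𝓡_j f)_β = ((β_j+1)/(|β|+1)) f_{β+e_j}` is a contraction on the Fock space
(coefficient norm `‖f‖² = Σ_α α! |f_α|²`). -/
theorem stmt11 (j : ℕ) (f : (ℕ →₀ ℕ) → ℂ)
    (hf : Summable fun α : ℕ →₀ ℕ => (α.prod fun _ n => (n.factorial : ℝ)) * ‖f α‖ ^ 2) :
    Summable (fun β : ℕ →₀ ℕ =>
      (β.prod fun _ n => (n.factorial : ℝ)) *
        ‖(((β j : ℂ) + 1) / (((β.sum fun _ n => n : ℕ) : ℂ) + 1)) *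
            f (β + Finsupp.single j 1)‖ ^ 2) ∧
    (∑' β : ℕ →₀ ℕ,
        (β.prod fun _ n => (n.factorial : ℝ)) *
          ‖(((β j : ℂ) + 1) / (((β.sum fun _ n => n : ℕ) : ℂ) + 1)) *
              f (β + Finsupp.single j 1)‖ ^ 2) ≤
      ∑' α : ℕ →₀ ℕ, (α.prod fun _ n => (n.factorial : ℝ)) * ‖f α‖ ^ 2 := by
  classical
  set g : (ℕ →₀ ℕ) → ℝ := fun α => (α.prod fun _ n => (n.factorial : ℝ)) * ‖f α‖ ^ 2 with hg
  have hp : ∀ γ : ℕ →₀ ℕ, 0 ≤ γ.prod fun _ n => (n.factorial : ℝ) := fun γ =>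
    Finset.prod_nonneg fun _ _ => by positivity
  have hg0 : ∀ α, 0 ≤ g α := fun α => mul_nonneg (hp α) (by positivity)
  have hinj : Function.Injective (fun β : ℕ →₀ ℕ => β + Finsupp.single j 1) :=
    add_left_injective _
  have hsum : Summable (fun β : ℕ →₀ ℕ => g (β + Finsupp.single j 1)) :=
    hf.comp_injective hinj
  have hle : ∀ β : ℕ →₀ ℕ,
      (β.prod fun _ n => (n.factorial : ℝ)) *
        ‖(((β j : ℂ) + 1) / (((β.sum fun _ n => n : ℕ) : ℂ) + 1)) *
            f (β + Finsupp.single j 1)‖ ^ 2 ≤ g (β + Finsupp.single j 1) := by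
    intro β
    have hβj : (β j : ℝ) + 1 ≤ ((β.sum fun _ n => n : ℕ) : ℝ) + 1 := by
      have : β j ≤ β.sum fun _ n => n := by
        by_cases hj : j ∈ β.support
        · exact Finset.single_le_sum (f := fun a => β a) (fun _ _ => Nat.zero_le _) hj
        · simp [Finsupp.notMem_support_iff.mp hj]
      exact_mod_cast Nat.succ_le_succ this
    have hnorm : ‖(((β j : ℂ) + 1) / (((β.sum fun _ n => n : ℕ) : ℂ) + 1))‖
        = ((β j : ℝ) + 1) / (((β.sum fun _ n => n : ℕ) : ℝ) + 1) := by
      rw [norm_div]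
      congr 1
      · rw [show ((β j : ℂ) + 1) = ((β j + 1 : ℕ) : ℂ) by push_cast; ring,
          Complex.norm_natCast]; push_cast; ring
      · rw [show (((β.sum fun _ n => n : ℕ) : ℂ) + 1) = (((β.sum fun _ n => n) + 1 : ℕ) : ℂ) by
          push_cast; ring, Complex.norm_natCast]; push_cast; ring
    simp only [hg]
    rw [stmt11_aux, norm_mul, mul_pow, hnorm]
    have hr : (((β j : ℝ) + 1) / (((β.sum fun _ n => n : ℕ) : ℝ) + 1)) ^ 2 ≤ 1 := by
      have h1 : (0:ℝ) < ((β.sum fun _ n => n : ℕ) : ℝ) + 1 := by positivity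
      have : ((β j : ℝ) + 1) / (((β.sum fun _ n => n : ℕ) : ℝ) + 1) ≤ 1 :=
        (div_le_one h1).mpr hβj
      have h0 : 0 ≤ ((β j : ℝ) + 1) / (((β.sum fun _ n => n : ℕ) : ℝ) + 1) := by positivity
      nlinarith
    have hβ1 : (1:ℝ) ≤ (β j : ℝ) + 1 := by
      have : (0:ℝ) ≤ (β j : ℝ) := Nat.cast_nonneg _
      linarith
    calc (β.prod fun _ n => (n.factorial : ℝ)) *
          ((((β j : ℝ) + 1) / (((β.sum fun _ n => n : ℕ) : ℝ) + 1)) ^ 2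
            * ‖f (β + Finsupp.single j 1)‖ ^ 2)
        ≤ (β.prod fun _ n => (n.factorial : ℝ)) *
            (((β j : ℝ) + 1) * ‖f (β + Finsupp.single j 1)‖ ^ 2) := by
          refine mul_le_mul_of_nonneg_left ?_ (hp β)
          refine mul_le_mul (hr.trans hβ1) le_rfl (by positivity) (by positivity)
      _ = ((β j : ℝ) + 1) * (β.prod fun _ n => (n.factorial : ℝ)) *
            ‖f (β + Finsupp.single j 1)‖ ^ 2 := by ring
  have hS : Summable (fun β : ℕ →₀ ℕ =>
      (β.prod fun _ n => (n.factorial : ℝ)) *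
        ‖(((β j : ℂ) + 1) / (((β.sum fun _ n => n : ℕ) : ℂ) + 1)) *
            f (β + Finsupp.single j 1)‖ ^ 2) := by
    exact Summable.of_nonneg_of_le (fun β => mul_nonneg (hp β) (by positivity)) hle hsum
  refine ⟨hS, ?_⟩
  calc (∑' β : ℕ →₀ ℕ, (β.prod fun _ n => (n.factorial : ℝ)) *
          ‖(((β j : ℂ) + 1) / (((β.sum fun _ n => n : ℕ) : ℂ) + 1)) *
              f (β + Finsupp.single j 1)‖ ^ 2)
      ≤ ∑' β : ℕ →₀ ℕ, g (β + Finsupp.single j 1) := Summable.tsum_le_tsum hle hS hsum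
    _ ≤ ∑' α : ℕ →₀ ℕ, g α :=
        Summable.tsum_le_tsum_of_inj _ hinj (fun a _ => hg0 a) (fun _ => le_rfl) hsum hf
end

section
/- Fix j ≥ 1 and let f : ℓ → ℂ be such that the family α ↦ (α!/|α|!) |f_α|^2 is summable. Define 𝓡_j f : ℓ → ℂ by (𝓡_j f)_β = ((β_j + 1)/(|β| + 1)) f_{β + e_j}. Then the family β ↦ (β!/|β|!) |(𝓡_j f)_β|^2 is summable and Σ_{β ∈ ℓ} (β!/|β|!) |(𝓡_j f)_β|^2 ≤ Σ_{α ∈ ℓ} (α!/|α|!) |f_α|^2. -/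
lemma arveson_prod_nonneg (β : ℕ →₀ ℕ) :
    0 ≤ β.prod fun _ n => (n.factorial : ℝ) :=
  Finset.prod_nonneg fun _ _ => by positivity

open Finset in
lemma arveson_prod_add_single (j : ℕ) (β : ℕ →₀ ℕ) :
    ((β + Finsupp.single j 1).prod fun _ n => (n.factorial : ℝ)) =
      (β.prod fun _ n => (n.factorial : ℝ)) * ((β j : ℝ) + 1) := by
  classical
  set s : Finset ℕ := β.support ∪ {j} with hs
  have hj : j ∈ s := Finset.mem_union_right _ (Finset.mem_singleton_self j)
  have hsub1 : (β + Finsupp.single j 1).support ⊆ s := by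
    refine (Finsupp.support_add).trans ?_
    apply Finset.union_subset_union subset_rfl
    exact Finsupp.support_single_subset
  have hsub2 : β.support ⊆ s := Finset.subset_union_left
  rw [Finsupp.prod_of_support_subset (β + Finsupp.single j 1) hsub1
      (fun _ n => (n.factorial : ℝ)) (fun i _ => by simp),
    Finsupp.prod_of_support_subset β hsub2
      (fun _ n => (n.factorial : ℝ)) (fun i _ => by simp),
    Finset.prod_eq_mul_prod_sdiff_singleton_of_mem hj,
    Finset.prod_eq_mul_prod_sdiff_singleton_of_mem hj (fun i => ((β i).factorial : ℝ))]
  have hβj : (β + Finsupp.single j 1 : ℕ →₀ ℕ) j = β j + 1 := by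
    rw [Finsupp.add_apply, Finsupp.single_apply]
    simp
  have hprod : ∏ i ∈ s \ {j}, (((β + Finsupp.single j 1 : ℕ →₀ ℕ) i).factorial : ℝ)
      = ∏ i ∈ s \ {j}, ((β i).factorial : ℝ) := by
    apply Finset.prod_congr rfl
    intro i hi
    have hij : i ≠ j := by
      simpa using (Finset.mem_sdiff.mp hi).2
    rw [Finsupp.add_apply, Finsupp.single_apply, if_neg (fun h => hij h.symm), add_zero]
  rw [hβj, hprod, Nat.factorial_succ]
  push_cast
  ring

lemma arveson_sum_add_single (j : ℕ) (β : ℕ →₀ ℕ) :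
    ((β + Finsupp.single j 1).sum fun _ n => n) = (β.sum fun _ n => n) + 1 := by
  rw [Finsupp.sum_add_index' (fun _ => rfl) (fun _ _ _ => rfl),
    Finsupp.sum_single_index rfl]

lemma arveson_arith (B F c M C : ℝ) (hB : 0 ≤ B) (hF : 0 < F) (hc : 0 ≤ c) (hM : c ≤ M)
    (hC : 0 ≤ C) :
    B / F * (((c + 1) / (M + 1)) ^ 2 * C) ≤ B * (c + 1) / ((M + 1) * F) * C := by
  have hM1 : (0:ℝ) < M + 1 := by linarith
  have h1 : (c + 1) / (M + 1) ≤ 1 := by rw [div_le_one hM1]; linarith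
  have h2 : (0:ℝ) ≤ (c + 1) / (M + 1) := by positivity
  have key : B / F * ((c + 1) / (M + 1)) ^ 2 ≤ B * (c + 1) / ((M + 1) * F) := by
    have step : B / F * ((c + 1) / (M + 1)) ^ 2 ≤ B / F * ((c + 1) / (M + 1)) := by
      rw [pow_two]
      apply mul_le_mul_of_nonneg_left _ (by positivity)
      calc (c + 1) / (M + 1) * ((c + 1) / (M + 1))
          ≤ (c + 1) / (M + 1) * 1 := mul_le_mul_of_nonneg_left h1 h2
        _ = (c + 1) / (M + 1) := mul_one _
    refine step.trans_eq ?_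
    rw [div_mul_div_comm, mul_comm F (M + 1)]
  calc B / F * (((c + 1) / (M + 1)) ^ 2 * C)
      = (B / F * ((c + 1) / (M + 1)) ^ 2) * C := by ring
    _ ≤ (B * (c + 1) / ((M + 1) * F)) * C := mul_le_mul_of_nonneg_right key hC

lemma arveson_key (j : ℕ) (f : (ℕ →₀ ℕ) → ℂ) (β : ℕ →₀ ℕ) :
    (β.prod fun _ n => (n.factorial : ℝ)) / ((β.sum fun _ n => n).factorial : ℝ) *
        ‖(((β j : ℂ) + 1) / (((β.sum fun _ n => n : ℕ) : ℂ) + 1)) *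
            f (β + Finsupp.single j 1)‖ ^ 2 ≤
      ((β + Finsupp.single j 1).prod fun _ n => (n.factorial : ℝ)) /
          (((β + Finsupp.single j 1).sum fun _ n => n).factorial : ℝ) *
        ‖f (β + Finsupp.single j 1)‖ ^ 2 := by
  classical
  have hjle : β j ≤ β.sum fun _ n => n := by
    by_cases h : j ∈ β.support
    · exact Finset.single_le_sum (fun i _ => Nat.zero_le _) h
    · simp [Finsupp.notMem_support_iff.mp h]
  rw [arveson_prod_add_single, arveson_sum_add_single]
  set m : ℕ := β.sum fun _ n => n with hm
  have hnorm : ‖(((β j : ℂ) + 1) / ((m : ℂ) + 1)) * f (β + Finsupp.single j 1)‖ ^ 2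
      = (((β j : ℝ) + 1) / ((m : ℝ) + 1)) ^ 2 * ‖f (β + Finsupp.single j 1)‖ ^ 2 := by
    rw [norm_mul, mul_pow]
    congr 2
    rw [show ((β j : ℂ) + 1) / ((m : ℂ) + 1)
        = (((((β j : ℝ) + 1) / ((m : ℝ) + 1)) : ℝ) : ℂ) by push_cast; ring]
    rw [Complex.norm_real, Real.norm_of_nonneg (by positivity)]
  rw [hnorm, Nat.factorial_succ]
  have hBnn := arveson_prod_nonneg β
  have hF : (0:ℝ) < (m.factorial : ℝ) := by exact_mod_cast m.factorial_pos
  have hMc : ((β j : ℝ)) ≤ (m : ℝ) := by exact_mod_cast hjle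
  have := arveson_arith (β.prod fun _ n => (n.factorial : ℝ)) (m.factorial : ℝ)
    (β j : ℝ) (m : ℝ) (‖f (β + Finsupp.single j 1)‖ ^ 2) hBnn hF (by positivity) hMc
    (by positivity)
  refine (this.trans_eq ?_)
  push_cast
  ring

/-- The Leibenzon backward-shift operator
`(𝓡_j f)_β = ((β_j+1)/(|β|+1)) f_{β+e_j}` is a contraction on the Arveson space
(coefficient norm `‖f‖² = Σ_α (α!/|α|!) |f_α|²`). -/
theorem stmt12 (j : ℕ) (f : (ℕ →₀ ℕ) → ℂ)
    (hf : Summable fun α : ℕ →₀ ℕ =>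
      (α.prod fun _ n => (n.factorial : ℝ)) / ((α.sum fun _ n => n).factorial : ℝ) *
        ‖f α‖ ^ 2) :
    Summable (fun β : ℕ →₀ ℕ =>
      (β.prod fun _ n => (n.factorial : ℝ)) / ((β.sum fun _ n => n).factorial : ℝ) *
        ‖(((β j : ℂ) + 1) / (((β.sum fun _ n => n : ℕ) : ℂ) + 1)) *
            f (β + Finsupp.single j 1)‖ ^ 2) ∧
    (∑' β : ℕ →₀ ℕ,
        (β.prod fun _ n => (n.factorial : ℝ)) / ((β.sum fun _ n => n).factorial : ℝ) *
          ‖(((β j : ℂ) + 1) / (((β.sum fun _ n => n : ℕ) : ℂ) + 1)) *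
              f (β + Finsupp.single j 1)‖ ^ 2) ≤
      ∑' α : ℕ →₀ ℕ,
        (α.prod fun _ n => (n.factorial : ℝ)) / ((α.sum fun _ n => n).factorial : ℝ) *
          ‖f α‖ ^ 2 := by
  classical
  set g : (ℕ →₀ ℕ) → ℝ := fun α =>
    (α.prod fun _ n => (n.factorial : ℝ)) / ((α.sum fun _ n => n).factorial : ℝ) *
      ‖f α‖ ^ 2 with hg
  set t : (ℕ →₀ ℕ) → ℝ := fun β =>
    (β.prod fun _ n => (n.factorial : ℝ)) / ((β.sum fun _ n => n).factorial : ℝ) *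
      ‖(((β j : ℂ) + 1) / (((β.sum fun _ n => n : ℕ) : ℂ) + 1)) *
          f (β + Finsupp.single j 1)‖ ^ 2 with ht
  set i : (ℕ →₀ ℕ) → (ℕ →₀ ℕ) := fun β => β + Finsupp.single j 1 with hi
  have hinj : Function.Injective i := add_left_injective _
  have hgnonneg : ∀ α, 0 ≤ g α := by
    intro α
    apply mul_nonneg _ (by positivity)
    exact div_nonneg (arveson_prod_nonneg α) (by positivity)
  have key : ∀ β, t β ≤ g (i β) := fun β => arveson_key j f β
  have htnonneg : ∀ β, 0 ≤ t β := by
    intro β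
    apply mul_nonneg _ (by positivity)
    exact div_nonneg (arveson_prod_nonneg β) (by positivity)
  have hgi_summable : Summable (fun β => g (i β)) := hf.comp_injective hinj
  have hts : Summable t := hgi_summable.of_nonneg_of_le htnonneg key
  refine ⟨hts, ?_⟩
  have hrange : ∑' x : Set.range i, g ↑x = ∑' β, g (i β) := by
    rw [← (Equiv.ofInjective i hinj).tsum_eq (fun x : Set.range i => g ↑x)]
    simp [Equiv.ofInjective_apply]
  calc (∑' β, t β) ≤ ∑' β, g (i β) := Summable.tsum_le_tsum key hts hgi_summable
    _ = ∑' x : Set.range i, g ↑x := hrange.symm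
    _ ≤ ∑' α, g α := Summable.tsum_subtype_le g _ hgnonneg hf
end

section
/- Fix j ≥ 1 and let f : ℓ → ℂ be such that the family α ↦ |f_α|^2 is summable. Define 𝓡_j f : ℓ → ℂ by (𝓡_j f)_β = ((β_j + 1)/(|β| + 1)) f_{β + e_j}. Then the family β ↦ |(𝓡_j f)_β|^2 is summable and Σ_{β ∈ ℓ} |(𝓡_j f)_β|^2 ≤ Σ_{α ∈ ℓ} |f_α|^2. -/
lemma aux13 (j : ℕ) (β : ℕ →₀ ℕ) : β j ≤ (β.sum fun _ n => n : ℕ) := by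
  by_cases h : j ∈ β.support
  · exact Finset.single_le_sum (fun i _ => Nat.zero_le _) h
  · simp [Finsupp.notMem_support_iff.mp h]

lemma aux13' (j : ℕ) (β : ℕ →₀ ℕ) :
    ‖(((β j : ℂ) + 1) / (((β.sum fun _ n => n : ℕ) : ℂ) + 1))‖ ≤ 1 := by
  rw [norm_div]
  have h1 : ((β j : ℂ) + 1) = ((β j + 1 : ℕ) : ℂ) := by push_cast; ring
  have h2 : (((β.sum fun _ n => n : ℕ) : ℂ) + 1) = (((β.sum fun _ n => n : ℕ) + 1 : ℕ) : ℂ) := by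
    push_cast; ring
  rw [h1, h2, Complex.norm_natCast, Complex.norm_natCast]
  rw [div_le_one (by positivity)]
  exact_mod_cast Nat.succ_le_succ (aux13 j β)

/-- The Leibenzon backward-shift operator
`(𝓡_j f)_β = ((β_j+1)/(|β|+1)) f_{β+e_j}` is a contraction on the infinite polydisk space
`𝓟` (coefficient norm `‖f‖² = Σ_α |f_α|²`). -/
theorem stmt13 (j : ℕ) (f : (ℕ →₀ ℕ) → ℂ)
    (hf : Summable fun α : ℕ →₀ ℕ => ‖f α‖ ^ 2) :
    Summable (fun β : ℕ →₀ ℕ =>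
      ‖(((β j : ℂ) + 1) / (((β.sum fun _ n => n : ℕ) : ℂ) + 1)) *
          f (β + Finsupp.single j 1)‖ ^ 2) ∧
    (∑' β : ℕ →₀ ℕ,
        ‖(((β j : ℂ) + 1) / (((β.sum fun _ n => n : ℕ) : ℂ) + 1)) *
            f (β + Finsupp.single j 1)‖ ^ 2) ≤
      ∑' α : ℕ →₀ ℕ, ‖f α‖ ^ 2 := by
  have hinj : Function.Injective (fun β : ℕ →₀ ℕ => β + Finsupp.single j 1) :=
    fun a b h => by simpa using add_right_cancel h
  have hcomp : Summable (fun β : ℕ →₀ ℕ => ‖f (β + Finsupp.single j 1)‖ ^ 2) :=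
    hf.comp_injective hinj
  have hle : ∀ β : ℕ →₀ ℕ,
      ‖(((β j : ℂ) + 1) / (((β.sum fun _ n => n : ℕ) : ℂ) + 1)) *
          f (β + Finsupp.single j 1)‖ ^ 2 ≤ ‖f (β + Finsupp.single j 1)‖ ^ 2 := by
    intro β
    rw [norm_mul]
    have h : ‖(((β j : ℂ) + 1) / (((β.sum fun _ n => n : ℕ) : ℂ) + 1))‖ *
        ‖f (β + Finsupp.single j 1)‖ ≤ ‖f (β + Finsupp.single j 1)‖ :=
      mul_le_of_le_one_left (norm_nonneg _) (aux13' j β)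
    exact pow_le_pow_left₀ (by positivity) h 2
  have hS : Summable (fun β : ℕ →₀ ℕ =>
      ‖(((β j : ℂ) + 1) / (((β.sum fun _ n => n : ℕ) : ℂ) + 1)) *
          f (β + Finsupp.single j 1)‖ ^ 2) :=
    Summable.of_nonneg_of_le (fun _ => by positivity) hle hcomp
  refine ⟨hS, ?_⟩
  calc _ ≤ ∑' β : ℕ →₀ ℕ, ‖f (β + Finsupp.single j 1)‖ ^ 2 := Summable.tsum_le_tsum hle hS hcomp
  _ ≤ ∑' α : ℕ →₀ ℕ, ‖f α‖ ^ 2 :=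
    Summable.tsum_le_tsum_of_inj _ hinj (fun _ _ => by positivity) (fun _ => le_rfl) hcomp hf
end

section
/- Let f : ℓ → ℂ be such that the family α ↦ (α!/|α|!) |f_α|^2 is summable. For j ≥ 1 define (𝓡_j f)_β = ((β_j + 1)/(|β| + 1)) f_{β + e_j}. Then the double family (j, β) ↦ (β!/|β|!) ((β_j + 1)/(|β| + 1))^2 |f_{β + e_j}|^2, indexed by pairs (j, β) with j ≥ 1 and β ∈ ℓ, is summable and Σ_{j ≥ 1} Σ_{β ∈ ℓ} (β!/|β|!) ((β_j + 1)/(|β| + 1))^2 |f_{β + e_j}|^2 = Σ_{α ∈ ℓ, α ≠ 0} (α!/|α|!) |f_α|^2. -/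
/-!
Write `w(α) = α!/|α|!`. Substituting `α = β + e_j`, the identity
`w(β + e_j) = w(β) (β_j + 1)/(|β| + 1)` turns the `(j, β)` term into `(α_j/|α|) w(α) |f_α|²`, a
term that vanishes unless `α_j ≠ 0`, i.e. unless `(α, j)` comes from some `(j, β)`. Since
`Σ_j α_j = |α|`, summing over `j` first returns `w(α) |f_α|²` for `α ≠ 0` and `0` for `α = 0`;
all terms are nonnegative, so the two sums may be interchanged.
-/

open Finsupp Nat

namespace Finsupp

variable {ι : Type*}

theorem prod_factorial_add_single {R : Type*} [CommSemiring R] (β : ι →₀ ℕ) (j : ι) :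
    ((β + single j 1).prod fun _ n => (n ! : R)) = (β j + 1) * β.prod fun _ n => (n ! : R) := by
  rw [← mul_prod_erase' (β + single j 1) j _ (by simp), ← mul_prod_erase' β j _ (by simp),
    erase_add, erase_single, add_zero, add_apply, single_eq_same, factorial_succ]
  push_cast
  ring

theorem hasSum_apply_div_degree {α : ι →₀ ℕ} (hα : α ≠ 0) :
    HasSum (fun j => (α j : ℝ) / α.degree) 1 := by
  have hdeg : (α.degree : ℝ) ≠ 0 := by exact_mod_cast mt (degree_eq_zero_iff α).mp hα
  have hfin : HasSum (fun j => (α j : ℝ) / α.degree) (∑ j ∈ α.support, (α j : ℝ) / α.degree) :=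
    hasSum_sum_of_ne_finset_zero fun j hj => by simp [notMem_support_iff.mp hj]
  rwa [← Finset.sum_div, ← Nat.cast_sum, ← degree_apply, div_self hdeg] at hfin

end Finsupp

variable {ι : Type*}

noncomputable def arvesonWeight (α : ι →₀ ℕ) : ℝ :=
  (α.prod fun _ n => (n ! : ℝ)) / (α.degree ! : ℝ)

theorem arvesonWeight_nonneg (α : ι →₀ ℕ) : 0 ≤ arvesonWeight α :=
  div_nonneg (Finset.prod_nonneg fun _ _ => by positivity) (by positivity)

theorem arvesonWeight_add_single (β : ι →₀ ℕ) (j : ι) :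
    arvesonWeight (β + single j 1) = arvesonWeight β * ((β j + 1) / (β.degree + 1)) := by
  have hfac : (β.degree ! : ℝ) ≠ 0 := by positivity
  rw [arvesonWeight, arvesonWeight, prod_factorial_add_single, map_add, degree_single,
    factorial_succ]
  push_cast
  field_simp

theorem hasSum_apply_div_degree_mul {g : (ι →₀ ℕ) → ℝ} (hg₀ : 0 ≤ g) (hg : Summable g) :
    HasSum (fun p : (ι →₀ ℕ) × ι => (p.1 p.2 : ℝ) / p.1.degree * g p.1)
      (∑' α : {α : ι →₀ ℕ // α ≠ 0}, g α) := by
  have hfiber (α : ι →₀ ℕ) :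
      HasSum (fun j => (α j : ℝ) / α.degree * g α) ({α | α ≠ 0}.indicator g α) := by
    by_cases hα : α = 0
    · simp [hα, hasSum_zero]
    · simpa [hα] using (hasSum_apply_div_degree hα).mul_right (g α)
  have hsum : Summable fun p : (ι →₀ ℕ) × ι => (p.1 p.2 : ℝ) / p.1.degree * g p.1 := by
    refine (summable_prod_of_nonneg fun p => mul_nonneg (by positivity) (hg₀ p.1)).2
      ⟨fun α => (hfiber α).summable, ?_⟩
    simpa only [(hfiber _).tsum_eq] using hg.indicator _
  convert hsum.hasSum
  exact (hasSum_subtype_iff_indicator.mpr (hsum.hasSum.prod_fiberwise hfiber)).tsum_eq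

noncomputable def raiseIndex (p : ι × (ι →₀ ℕ)) : (ι →₀ ℕ) × ι := (p.2 + single p.1 1, p.1)

theorem raiseIndex_injective : Function.Injective (raiseIndex (ι := ι)) := by
  rintro ⟨j, β⟩ ⟨j', β'⟩ h
  simp only [raiseIndex, Prod.mk.injEq] at h
  obtain ⟨hβ, rfl⟩ := h
  rw [add_right_cancel hβ]

theorem mem_range_raiseIndex {α : ι →₀ ℕ} {j : ι} (h : α j ≠ 0) :
    (α, j) ∈ Set.range raiseIndex :=
  ⟨(j, α - single j 1),
    Prod.ext (tsub_add_cancel_of_le (single_le_iff.mpr (one_le_iff_ne_zero.mpr h))) rfl⟩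

theorem hasSum_arvesonWeight_add_single {E : Type*} [SeminormedAddCommGroup E]
    (f : (ι →₀ ℕ) → E) (hf : Summable fun α => arvesonWeight α * ‖f α‖ ^ 2) :
    HasSum (fun p : ι × (ι →₀ ℕ) => arvesonWeight p.2 *
        (((p.2 p.1 : ℝ) + 1) / ((p.2.degree : ℝ) + 1)) ^ 2 * ‖f (p.2 + single p.1 1)‖ ^ 2)
      (∑' α : {α : ι →₀ ℕ // α ≠ 0}, arvesonWeight α.1 * ‖f α.1‖ ^ 2) := by
  set g := fun α => arvesonWeight α * ‖f α‖ ^ 2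
  have hg₀ : 0 ≤ g := fun α => mul_nonneg (arvesonWeight_nonneg α) (by positivity)
  convert (raiseIndex_injective.hasSum_iff ?_).mpr (hasSum_apply_div_degree_mul hg₀ hf) using 1
  · ext ⟨j, β⟩
    simp only [Function.comp_apply, raiseIndex, g, arvesonWeight_add_single, Finsupp.add_apply,
      single_eq_same, map_add, degree_single]
    push_cast
    ring
  · rintro ⟨α, j⟩ hq
    simp [not_not.mp (mt mem_range_raiseIndex hq)]

/-- Coefficient form of the identity `Σ_k M_{z_k} M_{z_k}^* = I − C^*C` in the Arveson
space: `Σ_{j} Σ_{β} (β!/|β|!) ((β_j+1)/(|β|+1))² |f_{β+e_j}|² = Σ_{α ≠ 0} (α!/|α|!) |f_α|²`. -/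
theorem stmt14 (f : (ℕ →₀ ℕ) → ℂ)
    (hf : Summable fun α : ℕ →₀ ℕ =>
      (α.prod fun _ n => (n.factorial : ℝ)) / ((α.sum fun _ n => n).factorial : ℝ) *
        ‖f α‖ ^ 2) :
    Summable (fun p : ℕ × (ℕ →₀ ℕ) =>
      (p.2.prod fun _ n => (n.factorial : ℝ)) / ((p.2.sum fun _ n => n).factorial : ℝ) *
        (((p.2 p.1 : ℝ) + 1) / (((p.2.sum fun _ n => n : ℕ) : ℝ) + 1)) ^ 2 *
        ‖f (p.2 + Finsupp.single p.1 1)‖ ^ 2) ∧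
    (∑' p : ℕ × (ℕ →₀ ℕ),
        (p.2.prod fun _ n => (n.factorial : ℝ)) / ((p.2.sum fun _ n => n).factorial : ℝ) *
          (((p.2 p.1 : ℝ) + 1) / (((p.2.sum fun _ n => n : ℕ) : ℝ) + 1)) ^ 2 *
          ‖f (p.2 + Finsupp.single p.1 1)‖ ^ 2) =
      ∑' α : {α : ℕ →₀ ℕ // α ≠ 0},
        (α.1.prod fun _ n => (n.factorial : ℝ)) / ((α.1.sum fun _ n => n).factorial : ℝ) *
          ‖f α.1‖ ^ 2 := by
  -- `α.sum fun _ n => n` unfolds to `Finsupp.degree α`, so `h` is the goal up to unfolding.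
  have h := hasSum_arvesonWeight_add_single f hf
  exact ⟨h.summable, h.tsum_eq⟩
end

section
/- Let V be a complex vector space, let ι : V → (ℓ → ℂ) be a linear map, and let (A_j)_{j ≥ 1} be a family of pairwise commuting linear endomorphisms of V solving Gleason's problem at the level of coefficients: for every f ∈ V and every α ∈ ℓ with α ≠ 0, (ι f)(α) = Σ_{j : α_j ≥ 1} (ι(A_j f))(α − e_j) (a finite sum). Then for every k ≥ 1, every f ∈ V and every β ∈ ℓ, (ι(A_k f))(β) = ((β_k + 1)/(|β| + 1)) · (ι f)(β + e_k). In particular, if ι is injective, the operators A_k coincide with the Leibenzon operators and any two commuting families of solutions of Gleason's problem coincide. -/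
/-- Uniqueness of commuting solutions of Gleason's problem, in coefficient form: if the
pairwise commuting operators `A_j` solve Gleason's problem
`(ι f)(α) = Σ_{j : α_j ≥ 1} (ι (A_j f))(α − e_j)` for `α ≠ 0`, then each `A_k` acts on
Taylor coefficients as the Leibenzon operator:
`(ι (A_k f))(β) = ((β_k+1)/(|β|+1)) (ι f)(β + e_k)`. -/
theorem stmt16 {V : Type*} [AddCommGroup V] [Module ℂ V]
    (ι : V →ₗ[ℂ] ((ℕ →₀ ℕ) → ℂ)) (A : ℕ → Module.End ℂ V)
    (hcomm : ∀ j k, Commute (A j) (A k))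
    (hGleason : ∀ (f : V) (α : ℕ →₀ ℕ), α ≠ 0 →
      ι f α = ∑ j ∈ α.support, ι (A j f) (α - Finsupp.single j 1)) :
    ∀ (k : ℕ) (f : V) (β : ℕ →₀ ℕ),
      ι (A k f) β =
        (((β k : ℂ) + 1) / (((β.sum fun _ n => n : ℕ) : ℂ) + 1)) *
          ι f (β + Finsupp.single k 1) := by
  suffices H : ∀ n (β : ℕ →₀ ℕ), (β.sum fun _ n => n) = n → ∀ k (f : V),
      ι (A k f) β = (((β k : ℂ) + 1) / ((n : ℂ) + 1)) * ι f (β + Finsupp.single k 1) by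
    intro k f β
    exact H _ β rfl k f
  intro n
  induction n using Nat.strong_induction_on with
  | _ n IH =>
  intro β hβ k f
  rcases Nat.eq_zero_or_pos n with hn | hn
  · -- base case: β = 0
    subst hn
    have hβ0 : β = 0 := by
      ext j
      rw [Finsupp.sum] at hβ
      by_cases hj : j ∈ β.support
      · exact Finset.sum_eq_zero_iff.mp hβ j hj
      · simpa using Finsupp.notMem_support_iff.mp hj
    subst hβ0
    have hne : (Finsupp.single k 1 : ℕ →₀ ℕ) ≠ 0 := by
      simp [Finsupp.single_eq_zero]
    have h := hGleason f (Finsupp.single k 1) hne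
    rw [Finsupp.support_single_ne_zero k one_ne_zero] at h
    simp only [Finset.sum_singleton, sub_self] at h
    simp [h]
  · -- inductive step
    have hβne : β ≠ 0 := by
      rintro rfl
      simp [Finsupp.sum_zero_index] at hβ
      omega
    have hncast : (n : ℂ) ≠ 0 := by
      exact_mod_cast Nat.cast_ne_zero.mpr (by omega)
    -- Step 1: Gleason for A k f at β, commute, IH
    have h1 := hGleason (A k f) β hβne
    have h2 : ∀ j ∈ β.support,
        ι (A j (A k f)) (β - Finsupp.single j 1)
        = (((((β - Finsupp.single j 1 : ℕ →₀ ℕ) k : ℕ) : ℂ) + 1) / (n : ℂ)) *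
            ι (A j f) ((β - Finsupp.single j 1) + Finsupp.single k 1) := by
      intro j hj
      have hjpos : 1 ≤ β j := Nat.one_le_iff_ne_zero.mpr (Finsupp.mem_support_iff.mp hj)
      have hle : Finsupp.single j 1 ≤ β := Finsupp.single_le_iff.mpr hjpos
      have hrec : (β - Finsupp.single j 1) + Finsupp.single j 1 = β :=
        tsub_add_cancel_of_le hle
      have hdeg : ((β - Finsupp.single j 1).sum fun _ n => n) = n - 1 := by
        have : ((β - Finsupp.single j 1).sum fun _ n => n)
            + ((Finsupp.single j 1 : ℕ →₀ ℕ).sum fun _ n => n)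
            = β.sum fun _ n => n := by
          rw [← Finsupp.sum_add_index' (fun _ => rfl) (fun _ _ _ => rfl), hrec]
        rw [Finsupp.sum_single_index rfl] at this
        omega
      have hAc : A j (A k f) = A k (A j f) := by
        have := DFunLike.congr_fun (hcomm j k) f
        simpa [Module.End.mul_apply] using this
      rw [hAc, IH (n - 1) (by omega) _ hdeg k (A j f)]
      have : ((n - 1 : ℕ) : ℂ) + 1 = (n : ℂ) := by
        have : (n - 1) + 1 = n := by omega
        exact_mod_cast congrArg (Nat.cast : ℕ → ℂ) this
      rw [this]
    rw [Finset.sum_congr rfl h2] at h1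
    -- abbreviations
    set x := ι (A k f) β with hx
    set S := ∑ j ∈ β.support.erase k,
        ι (A j f) ((β + Finsupp.single k 1) - Finsupp.single j 1) with hSdef
    -- rewrite terms for j ≠ k
    have hterm : ∀ j ∈ β.support.erase k,
        (((((β - Finsupp.single j 1 : ℕ →₀ ℕ) k : ℕ) : ℂ) + 1) / (n : ℂ)) *
            ι (A j f) ((β - Finsupp.single j 1) + Finsupp.single k 1)
        = (((β k : ℂ) + 1) / (n : ℂ)) *
            ι (A j f) ((β + Finsupp.single k 1) - Finsupp.single j 1) := by
      intro j hj
      have hjk : j ≠ k := Finset.ne_of_mem_erase hj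
      have hjs : j ∈ β.support := Finset.mem_of_mem_erase hj
      have hjpos : 1 ≤ β j := Nat.one_le_iff_ne_zero.mpr (Finsupp.mem_support_iff.mp hjs)
      have h5 : (β - Finsupp.single j 1 : ℕ →₀ ℕ) k = β k := by
        rw [Finsupp.tsub_apply, Finsupp.single_apply, if_neg (fun h : j = k => hjk h)]
        omega
      have hle : Finsupp.single j 1 ≤ β := Finsupp.single_le_iff.mpr hjpos
      have h6 : (β - Finsupp.single j 1) + Finsupp.single k 1
          = (β + Finsupp.single k 1) - Finsupp.single j 1 :=
        tsub_add_eq_add_tsub hle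
      rw [h5, h6]
    -- h3 : x = ((βk+1)/n) S + (βk/n) x
    have h3 : x = (((β k : ℂ) + 1) / (n : ℂ)) * S + ((β k : ℂ) / (n : ℂ)) * x := by
      conv_lhs => rw [h1]
      by_cases hk : k ∈ β.support
      · rw [← Finset.sum_erase_add _ _ hk, Finset.sum_congr rfl hterm, ← Finset.mul_sum,
          ← hSdef]
        have hkpos : 1 ≤ β k := Nat.one_le_iff_ne_zero.mpr (Finsupp.mem_support_iff.mp hk)
        have h7 : (β - Finsupp.single k 1 : ℕ →₀ ℕ) k = β k - 1 := by
          rw [Finsupp.tsub_apply, Finsupp.single_apply, if_pos rfl]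
        have h8 : (β - Finsupp.single k 1) + Finsupp.single k 1 = β :=
          tsub_add_cancel_of_le (Finsupp.single_le_iff.mpr hkpos)
        rw [h7, h8]
        have h9 : ((β k - 1 : ℕ) : ℂ) + 1 = (β k : ℂ) := by
          have : (β k - 1) + 1 = β k := by omega
          exact_mod_cast congrArg (Nat.cast : ℕ → ℂ) this
        rw [h9, ← hx]
      · have herase : β.support.erase k = β.support := Finset.erase_eq_of_notMem hk
        have hk0 : β k = 0 := Finsupp.notMem_support_iff.mp hk
        rw [← herase, Finset.sum_congr rfl hterm, ← Finset.mul_sum, ← hSdef, hk0]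
        push_cast
        ring
    -- h4 : ι f (β + e k) = S + x
    have hkmem : k ∈ (β + Finsupp.single k 1).support := by
      rw [Finsupp.mem_support_iff, Finsupp.add_apply, Finsupp.single_apply, if_pos rfl]
      omega
    have hne2 : β + Finsupp.single k 1 ≠ 0 := by
      intro h
      rw [h] at hkmem
      simp at hkmem
    have h4 : ι f (β + Finsupp.single k 1) = S + x := by
      rw [hGleason f (β + Finsupp.single k 1) hne2, ← Finset.sum_erase_add _ _ hkmem]
      have he : (β + Finsupp.single k 1).support.erase k = β.support.erase k := by
        ext j
        simp only [Finset.mem_erase, Finsupp.mem_support_iff, Finsupp.add_apply,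
          Finsupp.single_apply]
        constructor <;> rintro ⟨hjk, h⟩ <;>
          exact ⟨hjk, by simpa [if_neg (fun hh : k = j => hjk hh.symm)] using h⟩
      have hcanc : (β + Finsupp.single k 1) - Finsupp.single k 1 = β :=
        add_tsub_cancel_right β (Finsupp.single k 1)
      rw [he, hcanc, ← hSdef, hx]
    -- finish
    have hS : S = ι f (β + Finsupp.single k 1) - x := by rw [h4]; ring
    rw [hS] at h3
    have hn1 : ((n : ℂ) + 1) ≠ 0 := by
      have : ((n + 1 : ℕ) : ℂ) ≠ 0 := Nat.cast_ne_zero.mpr (by omega)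
      push_cast at this
      exact this
    field_simp at h3 ⊢
    linear_combination h3
end

section
/- Let V be a complex vector space, let ι : V → (ℓ → ℂ) be a linear map, and let (A_j)_{j ≥ 1} be a family of pairwise commuting linear endomorphisms of V such that for every f ∈ V and every α ∈ ℓ with α ≠ 0, (ι f)(α) = Σ_{j : α_j ≥ 1} (ι(A_j f))(α − e_j) (a finite sum). Then for every f ∈ V and every α ∈ ℓ, (ι f)(α) = (|α|!/α!) · (ι(A^α f))(0), where A^α denotes the finite composition ∏_j A_j^{α_j} (well defined since the A_j commute) and 0 ∈ ℓ is the zero multi-index. -/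
/-!
Iterating the Gleason relation walks from `α` down to `0` one unit step `e_j` at a time; because
the `A_j` commute, every such path contributes `ι (A^α f) 0`, and there are `|α|! / α!` paths.
Formally one proves `α! · ι f α = |α|! · ι (A^α f) 0` by induction on `|α|`, using
`(β + e_j)! = (β_j + 1) · β!`, `A^(β + e_j) = A^β A_j` and `∑_j α_j = |α|`.
-/

open Finsupp Nat

section CommMonomial

variable {M σ : Type*} [Monoid M] (A : σ → M) (hA : ∀ j k, Commute (A j) (A k))

def commMonomial (α : σ →₀ ℕ) : M :=
  α.support.noncommProd (fun j => A j ^ α j) fun j _ k _ _ => (hA j k).pow_pow _ _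

@[simp]
theorem commMonomial_zero : commMonomial A hA 0 = 1 := rfl

open scoped IsMulCommutative in
theorem commMonomial_add_single (β : σ →₀ ℕ) (j : σ) :
    commMonomial A hA (β + single j 1) = commMonomial A hA β * A j := by
  -- In the commutative submonoid generated by the `A k`, `commMonomial` is a `Finsupp.prod`.
  let N := Submonoid.closure (Set.range A)
  have : IsMulCommutative N := Submonoid.isMulCommutative_closure _ <| by
    rintro _ ⟨j, rfl⟩ _ ⟨k, rfl⟩
    exact hA j k
  let a (k : σ) : N := ⟨A k, Submonoid.subset_closure ⟨k, rfl⟩⟩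
  have hprod (α : σ →₀ ℕ) : commMonomial A hA α = ((α.prod fun k n => a k ^ n : N) : M) := by
    rw [Finsupp.prod, ← Finset.noncommProd_eq_prod]
    exact (Finset.map_noncommProd α.support (fun k => a k ^ α k) _ N.subtype).symm
  rw [hprod, hprod, prod_add_index' (fun _ => pow_zero _) (fun _ _ _ => pow_add _ _ _),
    prod_single_index (h := fun k n => a k ^ n) (pow_zero _), pow_one]
  rfl

end CommMonomial

theorem Finsupp.prod_factorial_add_single_s17 {σ R : Type*} [CommSemiring R] (β : σ →₀ ℕ) (j : σ) :
    ((β + single j 1).prod fun _ n => (n ! : R)) = (β j + 1) * β.prod fun _ n => (n ! : R) := by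
  have hg (i : σ) : ((0 : ℕ)! : R) = 1 := by simp
  rw [← mul_prod_erase' _ j _ hg, ← mul_prod_erase' β j _ hg, erase_add, erase_single, add_zero,
    ← mul_assoc]
  push_cast [add_apply, single_eq_same, factorial_succ]
  ring

theorem prod_factorial_mul_eq_of_gleason {M σ R V : Type*} [Monoid M] [MulAction M V]
    [CommSemiring R] (A : σ → M) (hA : ∀ j k, Commute (A j) (A k)) (c : V → (σ →₀ ℕ) → R)
    (hc : ∀ f α, α ≠ 0 → c f α = ∑ j ∈ α.support, c (A j • f) (α - single j 1))
    (f : V) (α : σ →₀ ℕ) :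
    (α.prod fun _ n => (n ! : R)) * c f α = (degree α)! * c (commMonomial A hA α • f) 0 := by
  induction hn : degree α generalizing f α with
  | zero =>
    obtain rfl : α = 0 := (degree_eq_zero_iff α).mp hn
    simp
  | succ n ih =>
    have hα : α ≠ 0 := by
      rintro rfl
      simp at hn
    have hterm : ∀ j ∈ α.support, (α.prod fun _ n => (n ! : R)) * c (A j • f) (α - single j 1)
        = α j * (n ! * c (commMonomial A hA α • f) 0) := by
      intro j hj
      have hle : single j 1 ≤ α :=
        single_le_iff.mpr (one_le_iff_ne_zero.mpr (mem_support_iff.mp hj))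
      obtain ⟨β, rfl⟩ : ∃ β, α = β + single j 1 :=
        ⟨α - single j 1, (tsub_add_cancel_of_le hle).symm⟩
      have hβ : degree β = n := by simpa [degree_single] using hn
      rw [add_tsub_cancel_right, prod_factorial_add_single_s17, mul_assoc, ih _ _ hβ,
        commMonomial_add_single, mul_smul]
      simp
    rw [hc f α hα, Finset.mul_sum, Finset.sum_congr rfl hterm, ← Finset.sum_mul, factorial_succ]
    push_cast [← hn, degree_apply]
    ring

/-- Iterated form of the Gleason decomposition: if the pairwise commuting operators `A_j`
solve Gleason's problem in coefficient form, then
`(ι f)(α) = (|α|!/α!) (ι (A^α f))(0)`, where `A^α = Π_j A_j^{α_j}`. -/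
theorem stmt17 {V : Type*} [AddCommGroup V] [Module ℂ V]
    (ι : V →ₗ[ℂ] ((ℕ →₀ ℕ) → ℂ)) (A : ℕ → Module.End ℂ V)
    (hcomm : ∀ j k, Commute (A j) (A k))
    (hGleason : ∀ (f : V) (α : ℕ →₀ ℕ), α ≠ 0 →
      ι f α = ∑ j ∈ α.support, ι (A j f) (α - Finsupp.single j 1)) :
    ∀ (f : V) (α : ℕ →₀ ℕ),
      ι f α =
        (((α.sum fun _ n => n).factorial : ℂ) / (α.prod fun _ n => (n.factorial : ℂ))) *
          ι ((α.support.noncommProd (fun j => A j ^ α j)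
              (fun j _ k _ _ => Commute.pow_pow (hcomm j k) _ _)) f) 0 := by
  intro f α
  have hfac : (α.prod fun _ n => (n ! : ℂ)) ≠ 0 :=
    Finset.prod_ne_zero_iff.mpr fun _ _ => Nat.cast_ne_zero.mpr (factorial_ne_zero _)
  rw [div_mul_eq_mul_div, eq_div_iff hfac, mul_comm]
  exact prod_factorial_mul_eq_of_gleason A hcomm ι hGleason f α
end
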